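/- For all permutations π and σ, if π is a pattern of σ (π ≤ σ), then L_σ ⊆ L_π. -/
import Mathlib


namespace PinStmt

abbrev Point : Type := ℝ × ℝ

inductive Letter : Type
  | n1 | n2 | n3 | n4 | U | D | L | R
deriving DecidableEq

def Letter.isNum : Letter → Bool
  | .n1 | .n2 | .n3 | .n4 => true
  | _ => false

/-- `c` is one of the numeral letters 1,2,3,4. -/
def Letter.IsNumeral (c : Letter) : Prop := c.isNum = true

/-- `c` is one of the direction letters U,D,L,R. -/
def Letter.IsDirection (c : Letter) : Prop := c.isNum = false

/-- `q i` lies strictly above all of `q 0, …, q (i-1)`. -/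
def AboveAll (q : ℕ → Point) (i : ℕ) : Prop := ∀ j < i, (q j).2 < (q i).2
def BelowAll (q : ℕ → Point) (i : ℕ) : Prop := ∀ j < i, (q i).2 < (q j).2
def RightAll (q : ℕ → Point) (i : ℕ) : Prop := ∀ j < i, (q j).1 < (q i).1
def LeftAll  (q : ℕ → Point) (i : ℕ) : Prop := ∀ j < i, (q i).1 < (q j).1

/-- The vertical line through `q i` strictly separates `q (i-1)` from `{q j | j < i-1}`. -/
def VLineSep (q : ℕ → Point) (i : ℕ) : Prop :=
  ((q (i - 1)).1 < (q i).1 ∧ ∀ j < i - 1, (q i).1 < (q j).1) ∨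
  ((q i).1 < (q (i - 1)).1 ∧ ∀ j < i - 1, (q j).1 < (q i).1)

/-- The horizontal line through `q i` strictly separates `q (i-1)` from `{q j | j < i-1}`. -/
def HLineSep (q : ℕ → Point) (i : ℕ) : Prop :=
  ((q (i - 1)).2 < (q i).2 ∧ ∀ j < i - 1, (q i).2 < (q j).2) ∨
  ((q i).2 < (q (i - 1)).2 ∧ ∀ j < i - 1, (q j).2 < (q i).2)

/-- Separation condition for the pin `q i`. -/
def SepCond (q : ℕ → Point) (i : ℕ) : Prop := VLineSep q i ∨ HLineSep q i

/-- Independence condition: neither line through `q i` splits `{q j | j < i}` in two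
nonempty parts. -/
def IndepCond (q : ℕ → Point) (i : ℕ) : Prop :=
  ¬((∃ j < i, (q j).1 < (q i).1) ∧ (∃ j < i, (q i).1 < (q j).1)) ∧
  ¬((∃ j < i, (q j).2 < (q i).2) ∧ (∃ j < i, (q i).2 < (q j).2))

/-- `q i` lies outside the bounding box of `{q j | j < i}`. -/
def OutsideBox (q : ℕ → Point) (i : ℕ) : Prop :=
  RightAll q i ∨ LeftAll q i ∨ AboveAll q i ∨ BelowAll q i

/-- `(q 0, …, q (m-1))` is a pin sequence. -/
def IsPinSeq (q : ℕ → Point) (m : ℕ) : Prop :=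
  (∀ i < m, ∀ j < m, i ≠ j → (q i).1 ≠ (q j).1 ∧ (q i).2 ≠ (q j).2) ∧
  (∀ i, 1 ≤ i → i < m → OutsideBox q i ∧ (SepCond q i ∨ IndepCond q i))

/-- `(p 0, …, p (n-1))` is a pin representation of `σ`, where `f` sends the time index of a
pin to the position (index) of the corresponding point in the diagram of `σ`. -/
def IsPinReprWith {n : ℕ} (σ : Equiv.Perm (Fin n)) (p : ℕ → Point)
    (f : Fin n ≃ Fin n) : Prop :=
  IsPinSeq p n ∧ ∀ j k : Fin n,
    ((p j.val).1 < (p k.val).1 ↔ f j < f k) ∧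
    ((p j.val).2 < (p k.val).2 ↔ σ (f j) < σ (f k))

def IsPinRepr {n : ℕ} (σ : Equiv.Perm (Fin n)) (p : ℕ → Point) : Prop :=
  ∃ f, IsPinReprWith σ p f

/-- `σ` is a pin-permutation. -/
def IsPinPerm {n : ℕ} (σ : Equiv.Perm (Fin n)) : Prop := ∃ p, IsPinRepr σ p

/-- Prepend the origin `p0` to the sequence of pins `p`. -/
def withOrigin (p0 : Point) (p : ℕ → Point) : ℕ → Point
  | 0 => p0
  | i + 1 => p i

/-- The letter encoding the pin `q i` (where `q 0` is the origin). -/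
def LetterIs (q : ℕ → Point) (i : ℕ) : Letter → Prop
  | .U => 2 ≤ i ∧ SepCond q i ∧ AboveAll q i
  | .D => 2 ≤ i ∧ SepCond q i ∧ BelowAll q i
  | .L => 2 ≤ i ∧ SepCond q i ∧ LeftAll q i
  | .R => 2 ≤ i ∧ SepCond q i ∧ RightAll q i
  | .n1 => IndepCond q i ∧ RightAll q i ∧ AboveAll q i
  | .n2 => IndepCond q i ∧ LeftAll q i ∧ AboveAll q i
  | .n3 => IndepCond q i ∧ LeftAll q i ∧ BelowAll q i
  | .n4 => IndepCond q i ∧ RightAll q i ∧ BelowAll q i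

/-- `w` is the pin word associated with the pin sequence `(q 0, q 1, …, q n)`,
whose origin is `q 0`. -/
def WordOf (q : ℕ → Point) (n : ℕ) (w : List Letter) : Prop :=
  w.length = n ∧ ∀ i < n, LetterIs q (i + 1) (w.getD i Letter.U)

/-- `P(σ)`: the set of pin words of the permutation `σ`. -/
def PinWords {n : ℕ} (σ : Equiv.Perm (Fin n)) : Set (List Letter) :=
  { w | ∃ (p : ℕ → Point) (p0 : Point), IsPinRepr σ p ∧
        IsPinSeq (withOrigin p0 p) (n + 1) ∧ WordOf (withOrigin p0 p) n w }

/-- The set of pin words associated with the fixed pin representation `p`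
over all admissible origins. -/
def WordsOfRepr (n : ℕ) (p : ℕ → Point) : Set (List Letter) :=
  { w | ∃ p0 : Point, IsPinSeq (withOrigin p0 p) (n + 1) ∧ WordOf (withOrigin p0 p) n w }

/-- `(p 0, …, p (n-1))` is a proper pin sequence: every pin from the third one on
satisfies the separation condition. -/
def IsProperSeq (p : ℕ → Point) (n : ℕ) : Prop :=
  IsPinSeq p n ∧ ∀ i, 2 ≤ i → i < n → SepCond p i

/-- `σ` is a proper pin-permutation. -/
def IsProperPinPerm {n : ℕ} (σ : Equiv.Perm (Fin n)) : Prop :=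
  ∃ p, IsPinRepr σ p ∧ IsProperSeq p n

/-- A strict pin word: a numeral followed only by directions. -/
def IsStrict (w : List Letter) : Prop :=
  ∃ c cs, w = c :: cs ∧ c.IsNumeral ∧ ∀ d ∈ cs, d.IsDirection

/-- A quasi-strict pin word: two numerals followed only by directions. -/
def IsQuasiStrict (w : List Letter) : Prop :=
  ∃ c₁ c₂ cs, w = c₁ :: c₂ :: cs ∧ c₁.IsNumeral ∧ c₂.IsNumeral ∧ ∀ d ∈ cs, d.IsDirection

/-- `w` is a pin word (of some permutation). -/
def IsPinWord (w : List Letter) : Prop :=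
  ∃ (n : ℕ) (σ : Equiv.Perm (Fin n)), w ∈ PinWords σ

/-- `SP`: the set of strict pin words. -/
def SPset : Set (List Letter) := { w | IsPinWord w ∧ IsStrict w }

def phi2 : Letter → Letter → List Letter
  | .n1, .R => [.R, .U, .R]
  | .n2, .R => [.L, .U, .R]
  | .n3, .R => [.L, .D, .R]
  | .n4, .R => [.R, .D, .R]
  | .n1, .L => [.R, .U, .L]
  | .n2, .L => [.L, .U, .L]
  | .n3, .L => [.L, .D, .L]
  | .n4, .L => [.R, .D, .L]
  | .n1, .U => [.U, .R, .U]
  | .n2, .U => [.U, .L, .U]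
  | .n3, .U => [.D, .L, .U]
  | .n4, .U => [.D, .R, .U]
  | .n1, .D => [.U, .R, .D]
  | .n2, .D => [.U, .L, .D]
  | .n3, .D => [.D, .L, .D]
  | .n4, .D => [.D, .R, .D]
  | _, _ => []

def phi1 : Letter → Set (List Letter)
  | .n1 => {[.U, .R], [.R, .U]}
  | .n2 => {[.U, .L], [.L, .U]}
  | .n3 => {[.D, .L], [.L, .D]}
  | .n4 => {[.R, .D], [.D, .R]}
  | _ => ∅

def phiInv2 : Letter → Letter → Letter
  | .U, .R => .n1
  | .R, .U => .n1
  | .U, .L => .n2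
  | .L, .U => .n2
  | .D, .L => .n3
  | .L, .D => .n3
  | .R, .D => .n4
  | .D, .R => .n4
  | _, _ => .n1

/-- `φ(u)`, as a set of words: a two-element set when `u` is a single numeral,
a singleton `{φ(u)}` when `u` is a strict pin word of length at least 2, and
the identity (as a singleton) on words of `M`. -/
def phiSet : List Letter → Set (List Letter)
  | [] => {[]}
  | [c] => if c.isNum then phi1 c else {[c]}
  | c :: d :: rest => if c.isNum then {phi2 c d ++ rest} else {c :: d :: rest}

/-- The quadrant numeral `q(c,d)`. -/
def quadNum (c d : Letter) : Letter :=
  if c.isNum then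
    match phi2 c d with
    | [_, b, e] => phiInv2 b e
    | _ => Letter.n1
  else phiInv2 c d

/-- `us` is the strong numeral-led factor decomposition of `u`. -/
def IsSNLD (u : List Letter) (us : List (List Letter)) : Prop :=
  us.flatten = u ∧ ∀ v ∈ us, IsStrict v

def interleave : List (List Letter) → List (List Letter) → List Letter
  | [], _ => []
  | v :: vs, [] => v ++ interleave vs []
  | v :: vs, w :: ws => v ++ w ++ interleave vs ws

/-- The condition on the pieces `v^(i)`, `w^(i)`, `u^(i)` in the definition of `≼`. -/
def PieceCond (v wi ui : List Letter) : Prop :=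
  (∃ c cs, wi = c :: cs ∧ c.IsNumeral ∧ wi = ui) ∨
  (∃ d ds c, wi = d :: ds ∧ d.IsDirection ∧ v ≠ [] ∧ v.getLast? = some c ∧
    ui = quadNum c d :: ds)

/-- The order `u ≼ w` on pin words. -/
def PinOrder (u w : List Letter) : Prop :=
  ∃ us, IsSNLD u us ∧
    ∃ vs ws : List (List Letter), ws.length = us.length ∧ vs.length = us.length + 1 ∧
      w = interleave vs ws ∧
      ∀ i < us.length, PieceCond (vs.getD i []) (ws.getD i []) (us.getD i [])

def IsVert (c : Letter) : Prop := c = Letter.U ∨ c = Letter.D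
def IsHoriz (c : Letter) : Prop := c = Letter.L ∨ c = Letter.R

/-- `M`: words over `{U,D,L,R}` of length at least 2 with no factor in
`{UU,UD,DU,DD,LL,LR,RL,RR}`. -/
def MSet : Set (List Letter) :=
  { w | 2 ≤ w.length ∧ (∀ c ∈ w, c.IsDirection) ∧
        ∀ a c : Letter, [a, c] <:+: w →
          ¬(IsVert a ∧ IsVert c) ∧ ¬(IsHoriz a ∧ IsHoriz c) }

/-- `A*`: all words over the direction alphabet `A = {U,D,L,R}`. -/
def Astar : Set (List Letter) := { w | ∀ c ∈ w, c.IsDirection }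

/-- Concatenation of languages. -/
def LMul (X Y : Set (List Letter)) : Set (List Letter) :=
  { w | ∃ x ∈ X, ∃ y ∈ Y, w = x ++ y }

/-- The language `L(u) = A* φ(u^(1)) A* φ(u^(2)) … A* φ(u^(j)) A*`. -/
def LangOf (u : List Letter) : Set (List Letter) :=
  { m | ∃ us, IsSNLD u us ∧
      ∃ vs ws : List (List Letter), ws.length = us.length ∧ vs.length = us.length + 1 ∧
        m = interleave vs ws ∧ (∀ v ∈ vs, v ∈ Astar) ∧
        ∀ i < us.length, ws.getD i [] ∈ phiSet (us.getD i []) }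

/-- The language `L_π = ⋃_{u ∈ P(π)} L(u)`. -/
def Lperm {n : ℕ} (π : Equiv.Perm (Fin n)) : Set (List Letter) :=
  { m | ∃ u ∈ PinWords π, m ∈ LangOf u }

/-- `π ≤ σ`: the permutation `π` is a pattern of the permutation `σ`. -/
def IsPattern {k n : ℕ} (π : Equiv.Perm (Fin k)) (σ : Equiv.Perm (Fin n)) : Prop :=
  ∃ g : Fin k → Fin n, StrictMono g ∧ ∀ a b : Fin k, (π a < π b ↔ σ (g a) < σ (g b))

/-- `q i` lies in the quadrant (given by a numeral letter) of the bounding box of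
`{q j | j < m}`. -/
def InQuadOf (q : ℕ → Point) (i m : ℕ) : Letter → Prop
  | .n1 => (∀ j < m, (q j).1 < (q i).1) ∧ (∀ j < m, (q j).2 < (q i).2)
  | .n2 => (∀ j < m, (q i).1 < (q j).1) ∧ (∀ j < m, (q j).2 < (q i).2)
  | .n3 => (∀ j < m, (q i).1 < (q j).1) ∧ (∀ j < m, (q i).2 < (q j).2)
  | .n4 => (∀ j < m, (q j).1 < (q i).1) ∧ (∀ j < m, (q i).2 < (q j).2)
  | _ => False


/-- `σ = ⊕[π_0, …, π_(r-1)]` where the `k`-th child occupies positions and values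
`[b k, b (k+1))`. -/
def SumDecomp {n : ℕ} (σ : Equiv.Perm (Fin n)) (r : ℕ) (b : ℕ → ℕ) : Prop :=
  b 0 = 0 ∧ b r = n ∧ (∀ k < r, b k < b (k + 1)) ∧
  ∀ k < r, ∀ i : Fin n, b k ≤ i.val → i.val < b (k + 1) →
    b k ≤ (σ i).val ∧ (σ i).val < b (k + 1)

/-- The child of `σ` occupying positions `[lo, hi)` is ⊕-indecomposable. -/
def ChildIndecomp {n : ℕ} (σ : Equiv.Perm (Fin n)) (lo hi : ℕ) : Prop :=
  ¬ ∃ m, lo < m ∧ m < hi ∧ ∀ i : Fin n, lo ≤ i.val → i.val < m → (σ i).val < m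

/-- The pin read at time `a` belongs to the `k`-th child (`f` sends times to positions). -/
def PinInChild {n : ℕ} (b : ℕ → ℕ) (f : Fin n ≃ Fin n) (a : Fin n) (k : ℕ) : Prop :=
  b k ≤ (f a).val ∧ (f a).val < b (k + 1)

/-- The set of (times of) pins belonging to the `k`-th child. -/
def ChildPins {n : ℕ} (b : ℕ → ℕ) (f : Fin n ≃ Fin n) (k : ℕ) : Set (Fin n) :=
  { a | PinInChild b f a k }

/-- The starting times of the maximal runs of consecutive reading times in `S`. -/
def PieceStarts {n : ℕ} (S : Set (Fin n)) : Set (Fin n) :=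
  { a | a ∈ S ∧ ∀ c : Fin n, c.val + 1 = a.val → c ∉ S }

/-- `S` is read in exactly `k` pieces. -/
def ReadInPieces {n : ℕ} (S : Set (Fin n)) (k : ℕ) : Prop := (PieceStarts S).ncard = k

/-- The pins of `D` are all read before the pins of `C`. -/
def ReadBefore {n : ℕ} (D C : Set (Fin n)) : Prop := ∀ a ∈ D, ∀ c ∈ C, a < c

/-- The infinite oscillating sequence `ω = 3 1 5 2 7 4 9 6 …` (1-indexed). -/
def omegaSeq (i : ℕ) : ℕ := if i = 2 then 1 else if i % 2 = 1 then i + 2 else i - 2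

/-- `π` is a pattern of some prefix of the infinite oscillating sequence `ω`. -/
def IsOmegaPattern {k : ℕ} (π : Equiv.Perm (Fin k)) : Prop :=
  ∃ g : Fin k → ℕ, StrictMono g ∧ (∀ a, 1 ≤ g a) ∧
    ∀ a b : Fin k, (π a < π b ↔ omegaSeq (g a) < omegaSeq (g b))

/-- The interval of positions `[lo, lo+len)` is a block of `σ`. -/
def IsBlockOf {n : ℕ} (σ : Equiv.Perm (Fin n)) (lo len : ℕ) : Prop :=
  lo + len ≤ n ∧ ∃ vlo, ∀ i : Fin n,
    (lo ≤ i.val ∧ i.val < lo + len) ↔ (vlo ≤ (σ i).val ∧ (σ i).val < vlo + len)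

/-- `σ` is a simple permutation. -/
def IsSimplePerm {n : ℕ} (σ : Equiv.Perm (Fin n)) : Prop :=
  4 ≤ n ∧ ∀ lo len, IsBlockOf σ lo len → len ≤ 1 ∨ len = n

/-- `π` is the permutation whose one-line notation is the list `l`. -/
def PermMatches {k : ℕ} (π : Equiv.Perm (Fin k)) (l : List ℕ) : Prop :=
  l.length = k ∧ ∀ i : Fin k, (π i).val + 1 = l.getD i.val 0

/-- `ξ` is an increasing oscillation. -/
def IsIncrOsc {k : ℕ} (ξ : Equiv.Perm (Fin k)) : Prop :=
  PermMatches ξ [1] ∨ PermMatches ξ [2, 1] ∨ PermMatches ξ [2, 3, 1] ∨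
  PermMatches ξ [3, 1, 2] ∨ (4 ≤ k ∧ IsSimplePerm ξ ∧ IsOmegaPattern ξ)

/-- The child of `σ` occupying positions `[lo, hi)` is order-isomorphic to `ξ`. -/
def ChildIsPerm {n m : ℕ} (σ : Equiv.Perm (Fin n)) (lo hi : ℕ)
    (ξ : Equiv.Perm (Fin m)) : Prop :=
  lo + m = hi ∧ ∀ (a c : Fin m) (ia ic : Fin n), ia.val = lo + a.val → ic.val = lo + c.val →
    ((σ ia).val < (σ ic).val ↔ (ξ a).val < (ξ c).val)

/-- The child of `σ` occupying positions `[lo, hi)` is an increasing oscillation. -/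
def ChildIsIncrOsc {n : ℕ} (σ : Equiv.Perm (Fin n)) (lo hi : ℕ) : Prop :=
  ∃ (m : ℕ) (ξ : Equiv.Perm (Fin m)), IsIncrOsc ξ ∧ ChildIsPerm σ lo hi ξ

/-- `τ = ⊕[ξ, η]`. -/
def IsDSum2 {m k l : ℕ} (τ : Equiv.Perm (Fin m)) (ξ : Equiv.Perm (Fin k))
    (η : Equiv.Perm (Fin l)) : Prop :=
  m = k + l ∧ (∀ i : Fin m, i.val < k → (τ i).val < k) ∧
    ChildIsPerm τ 0 k ξ ∧ ChildIsPerm τ k m η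

/-- The origin `p0` lies in quadrant 1 of the bounding box of `{p j | j < n}`. -/
def OriginQ1 (p0 : Point) (p : ℕ → Point) (n : ℕ) : Prop :=
  ∀ j < n, (p j).1 < p0.1 ∧ (p j).2 < p0.2

/-- The origin `p0` lies in quadrant 3 of the bounding box of `{p j | j < n}`. -/
def OriginQ3 (p0 : Point) (p : ℕ → Point) (n : ℕ) : Prop :=
  ∀ j < n, p0.1 < (p j).1 ∧ p0.2 < (p j).2

/-- `P^(1)(ξ)`: pin words of `ξ` whose origin lies in quadrant 1 w.r.t. the points of `ξ`. -/
def PinWordsQ1 {n : ℕ} (ξ : Equiv.Perm (Fin n)) : Set (List Letter) :=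
  { w | ∃ (p : ℕ → Point) (p0 : Point), IsPinRepr ξ p ∧
        IsPinSeq (withOrigin p0 p) (n + 1) ∧ WordOf (withOrigin p0 p) n w ∧ OriginQ1 p0 p n }

/-- `P^(3)(ξ)`: pin words of `ξ` whose origin lies in quadrant 3 w.r.t. the points of `ξ`. -/
def PinWordsQ3 {n : ℕ} (ξ : Equiv.Perm (Fin n)) : Set (List Letter) :=
  { w | ∃ (p : ℕ → Point) (p0 : Point), IsPinRepr ξ p ∧
        IsPinSeq (withOrigin p0 p) (n + 1) ∧ WordOf (withOrigin p0 p) n w ∧ OriginQ3 p0 p n }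

/-- The shuffle product of two sequences of sets of words. -/
def ShuffleSeq : List (Set (List Letter)) → List (Set (List Letter)) → Set (List Letter)
  | [], [] => {[]}
  | X :: As, [] => { w | ∃ x ∈ X, ∃ t ∈ ShuffleSeq As [], w = x ++ t }
  | [], Y :: Bs => { w | ∃ y ∈ Y, ∃ t ∈ ShuffleSeq ([] : List (Set (List Letter))) Bs, w = y ++ t }
  | X :: As, Y :: Bs =>
      { w | (∃ x ∈ X, ∃ t ∈ ShuffleSeq As (Y :: Bs), w = x ++ t) ∨
            (∃ y ∈ Y, ∃ t ∈ ShuffleSeq (X :: As) Bs, w = y ++ t) }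
  termination_by A B => A.length + B.length

/-- The `p`-fold repetition `x^p` of the word `x`. -/
def repW (p : ℕ) (x : List Letter) : List Letter := (List.replicate p x).flatten

/-- The points of `ξ` at positions `i` and `j` form an active knight of `ξ`:
they occur (in some order) as the first two pins of some pin representation of `ξ`. -/
def ActiveKnight {k : ℕ} (ξ : Equiv.Perm (Fin k)) (i j : Fin k) : Prop :=
  ∃ (p : ℕ → Point) (f : Fin k ≃ Fin k) (h2 : 2 ≤ k),
    IsPinReprWith ξ p f ∧
    ((f ⟨0, by omega⟩ = i ∧ f ⟨1, by omega⟩ = j) ∨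
     (f ⟨0, by omega⟩ = j ∧ f ⟨1, by omega⟩ = i))

/-- The points at positions `i`, `j` are in horizontal knight position. -/
def KnightH {k : ℕ} (ξ : Equiv.Perm (Fin k)) (i j : Fin k) : Prop :=
  (i.val + 2 = j.val ∨ j.val + 2 = i.val) ∧
  ((ξ i).val + 1 = (ξ j).val ∨ (ξ j).val + 1 = (ξ i).val)

/-- The points at positions `i`, `j` are in vertical knight position. -/
def KnightV {k : ℕ} (ξ : Equiv.Perm (Fin k)) (i j : Fin k) : Prop :=
  (i.val + 1 = j.val ∨ j.val + 1 = i.val) ∧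
  ((ξ i).val + 2 = (ξ j).val ∨ (ξ j).val + 2 = (ξ i).val)

inductive KType : Type
  | H | V

def KnightOfType {k : ℕ} (t : KType) (ξ : Equiv.Perm (Fin k)) (i j : Fin k) : Prop :=
  match t with
  | .H => KnightH ξ i j
  | .V => KnightV ξ i j

/-- The increasing oscillation `ξ` has type `(x, y)`: its lower-left active knight
(the one containing the leftmost point) has knight-position type `x` and its
upper-right active knight (the one containing the rightmost point) has type `y`. -/
def HasOscType {k : ℕ} (ξ : Equiv.Perm (Fin k)) (x y : KType) : Prop :=
  ∃ i j i' j' : Fin k, ActiveKnight ξ i j ∧ ActiveKnight ξ i' j' ∧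
    i.val = 0 ∧ j'.val + 1 = k ∧ KnightOfType x ξ i j ∧ KnightOfType y ξ i' j'

/-- The permutation 21. -/
def perm21 : Equiv.Perm (Fin 2) := Equiv.swap 0 1

/-- The permutation 12. -/
def perm12 : Equiv.Perm (Fin 2) := Equiv.refl (Fin 2)

def EndsH (w : List Letter) : Prop := w.getLast? = some Letter.R ∨ w.getLast? = some Letter.L
def EndsV (w : List Letter) : Prop := w.getLast? = some Letter.U ∨ w.getLast? = some Letter.D

/-- `Q⁻`: quasi-strict pin words of 21. -/
def Qminus : Set (List Letter) := { w | w ∈ PinWords perm21 ∧ IsQuasiStrict w }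
/-- `S⁻_H`: strict pin words of 21 ending with R or L. -/
def SminusH : Set (List Letter) := { w | w ∈ PinWords perm21 ∧ IsStrict w ∧ EndsH w }
/-- `S⁻_V`: strict pin words of 21 ending with U or D. -/
def SminusV : Set (List Letter) := { w | w ∈ PinWords perm21 ∧ IsStrict w ∧ EndsV w }
/-- `Q⁺`: quasi-strict pin words of 12. -/
def Qplus : Set (List Letter) := { w | w ∈ PinWords perm12 ∧ IsQuasiStrict w }
/-- `S⁺_H`: strict pin words of 12 ending with R or L. -/
def SplusH : Set (List Letter) := { w | w ∈ PinWords perm12 ∧ IsStrict w ∧ EndsH w }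
/-- `S⁺_V`: strict pin words of 12 ending with U or D. -/
def SplusV : Set (List Letter) := { w | w ∈ PinWords perm12 ∧ IsStrict w ∧ EndsV w }

/-- `P^mix(ξ_i, ξ_j)` for `τ = ⊕[ξ_i, ξ_j]` with `|ξ_i| = s1`: pin words associated
with a pin representation of `τ` reading one of the two children in two pieces. -/
def Pmix {m : ℕ} (τ : Equiv.Perm (Fin m)) (s1 : ℕ) : Set (List Letter) :=
  { w | ∃ (p : ℕ → Point) (p0 : Point) (f : Fin m ≃ Fin m),
      IsPinReprWith τ p f ∧ IsPinSeq (withOrigin p0 p) (m + 1) ∧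
      WordOf (withOrigin p0 p) m w ∧
      (ReadInPieces { a : Fin m | (f a).val < s1 } 2 ∨
       ReadInPieces { a : Fin m | s1 ≤ (f a).val } 2) }

/-- The set of words `{13, 23, 33, 43, 1D, 4D}`. -/
def W13D : Set (List Letter) :=
  {[Letter.n1, Letter.n3], [Letter.n2, Letter.n3], [Letter.n3, Letter.n3],
   [Letter.n4, Letter.n3], [Letter.n1, Letter.D], [Letter.n4, Letter.D]}

/-- The set of words `{13, 23, 33, 43, 1L, 2L}`. -/
def W13L : Set (List Letter) :=
  {[Letter.n1, Letter.n3], [Letter.n2, Letter.n3], [Letter.n3, Letter.n3],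
   [Letter.n4, Letter.n3], [Letter.n1, Letter.L], [Letter.n2, Letter.L]}

/-- `M_2 = {UR, UL, DR, DL, RU, RD, LU, LD}`. -/
def M2Set : Set (List Letter) :=
  {[Letter.U, Letter.R], [Letter.U, Letter.L], [Letter.D, Letter.R], [Letter.D, Letter.L],
   [Letter.R, Letter.U], [Letter.R, Letter.D], [Letter.L, Letter.U], [Letter.L, Letter.D]}

/-- `E^s_π`: the words `φ(u)` for `u ∈ P(π)` strict. -/
def EsSet {n : ℕ} (π : Equiv.Perm (Fin n)) : Set (List Letter) :=
  { v | ∃ u ∈ PinWords π, IsStrict u ∧ v ∈ phiSet u }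

/-- `E^qs_π`: the words `φ(u^(2))` for `u = u^(1)u^(2) ∈ P(π)` quasi-strict. -/
def EqsSet {n : ℕ} (π : Equiv.Perm (Fin n)) : Set (List Letter) :=
  { v | ∃ u ∈ PinWords π, IsQuasiStrict u ∧ ∃ u1 u2, IsSNLD u [u1, u2] ∧ v ∈ phiSet u2 }



/-! ### Auxiliary development for Statement 5 -/

section Aux

/-- Perpendicular direction letters. -/
def Perp (a b : Letter) : Prop :=
  ((a = Letter.U ∨ a = Letter.D) ∧ (b = Letter.L ∨ b = Letter.R)) ∨
  ((a = Letter.L ∨ a = Letter.R) ∧ (b = Letter.U ∨ b = Letter.D))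

instance (a b : Letter) : Decidable (Perp a b) := by unfold Perp; infer_instance

/-- List version of `phi1`. -/
def phi1L : Letter → List (List Letter)
  | .n1 => [[.U, .R], [.R, .U]]
  | .n2 => [[.U, .L], [.L, .U]]
  | .n3 => [[.D, .L], [.L, .D]]
  | .n4 => [[.R, .D], [.D, .R]]
  | _ => []

lemma mem_phi1_iff (c : Letter) (w : List Letter) : w ∈ phi1 c ↔ w ∈ phi1L c := by
  cases c <;> simp [phi1, phi1L, Set.mem_insert_iff]

lemma phi1_dir {c : Letter} {w : List Letter} (h : w ∈ phi1 c) :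
    ∀ a ∈ w, a.IsDirection := by
  rw [mem_phi1_iff] at h
  cases c <;> simp_all [phi1L] <;>
    rcases h with h | h <;> subst h <;> intro a ha <;>
      simp_all [Letter.IsDirection, Letter.isNum] <;>
      rcases ha with h | h <;> subst h <;> rfl

lemma astar_append {x y : List Letter} (hx : x ∈ Astar) (hy : y ∈ Astar) :
    x ++ y ∈ Astar := by
  intro a ha
  rcases List.mem_append.mp ha with h | h
  · exact hx a h
  · exact hy a h

/-- Key facts about `phi2` on a numeral followed by a direction. -/
lemma LF1 {c d : Letter} (hc : c.isNum = true) (hd : d.isNum = false) :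
    ∃ x y : Letter, phi2 c d = [x, y, d] ∧ x.IsDirection ∧ y.IsDirection ∧
      [x, y] ∈ phi1 c ∧ [y, d] ∈ phi1 (quadNum c d) ∧ Perp y d ∧
      (quadNum c d).isNum = true := by
  cases c <;> cases d <;>
    first
      | exact absurd hc (by decide)
      | exact absurd hd (by decide)
      | exact ⟨_, _, rfl, rfl, rfl, by rw [mem_phi1_iff]; decide,
          by rw [mem_phi1_iff]; decide, by decide, by decide⟩

/-- Key facts about `quadNum` on two perpendicular directions. -/
lemma LF2 {c d : Letter} (hp : Perp c d) :
    [c, d] ∈ phi1 (quadNum c d) ∧ (quadNum c d).isNum = true := by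
  rcases hp with ⟨hc, hd⟩ | ⟨hc, hd⟩ <;> rcases hc with rfl | rfl <;>
    rcases hd with rfl | rfl <;>
      exact ⟨by rw [mem_phi1_iff]; decide, by decide⟩

/-- `phi2` of a numeral continues its `phi1` pair. -/
lemma LF3 {ν y d t : Letter} (h : [y, d] ∈ phi1 ν) (hp : Perp d t) :
    phi2 ν t = [y, d, t] := by
  rw [mem_phi1_iff] at h
  cases ν <;> simp [phi1L] at h <;>
    rcases h with ⟨rfl, rfl⟩ | ⟨rfl, rfl⟩ <;>
      rcases hp with ⟨hd, ht⟩ | ⟨hd, ht⟩ <;>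
        first
          | exact absurd hd (by decide)
          | (rcases ht with rfl | rfl <;> rfl)

lemma perp_dir {a b : Letter} (h : Perp a b) :
    a.IsDirection ∧ b.IsDirection := by
  rcases h with ⟨ha, hb⟩ | ⟨ha, hb⟩ <;> rcases ha with rfl | rfl <;>
    rcases hb with rfl | rfl <;> exact ⟨rfl, rfl⟩

/-! ### Transfer lemmas for the geometric predicates -/

lemma RightAll_transfer {q q' : ℕ → Point} {t t' : ℕ}
    (hc : q' t' = q t) (hf : ∀ j < t', ∃ j' < t, q' j = q j')
    (h : RightAll q t) : RightAll q' t' := by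
  intro j hj; obtain ⟨j', hj', e⟩ := hf j hj; rw [e, hc]; exact h j' hj'

lemma LeftAll_transfer {q q' : ℕ → Point} {t t' : ℕ}
    (hc : q' t' = q t) (hf : ∀ j < t', ∃ j' < t, q' j = q j')
    (h : LeftAll q t) : LeftAll q' t' := by
  intro j hj; obtain ⟨j', hj', e⟩ := hf j hj; rw [e, hc]; exact h j' hj'

lemma AboveAll_transfer {q q' : ℕ → Point} {t t' : ℕ}
    (hc : q' t' = q t) (hf : ∀ j < t', ∃ j' < t, q' j = q j')
    (h : AboveAll q t) : AboveAll q' t' := by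
  intro j hj; obtain ⟨j', hj', e⟩ := hf j hj; rw [e, hc]; exact h j' hj'

lemma BelowAll_transfer {q q' : ℕ → Point} {t t' : ℕ}
    (hc : q' t' = q t) (hf : ∀ j < t', ∃ j' < t, q' j = q j')
    (h : BelowAll q t) : BelowAll q' t' := by
  intro j hj; obtain ⟨j', hj', e⟩ := hf j hj; rw [e, hc]; exact h j' hj'

lemma OutsideBox_transfer {q q' : ℕ → Point} {t t' : ℕ}
    (hc : q' t' = q t) (hf : ∀ j < t', ∃ j' < t, q' j = q j')
    (h : OutsideBox q t) : OutsideBox q' t' := by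
  rcases h with h | h | h | h
  · exact Or.inl (RightAll_transfer hc hf h)
  · exact Or.inr (Or.inl (LeftAll_transfer hc hf h))
  · exact Or.inr (Or.inr (Or.inl (AboveAll_transfer hc hf h)))
  · exact Or.inr (Or.inr (Or.inr (BelowAll_transfer hc hf h)))

lemma VLineSep_transfer {q q' : ℕ → Point} {t t' : ℕ}
    (hc : q' t' = q t) (hp : q' (t' - 1) = q (t - 1))
    (hf : ∀ j < t' - 1, ∃ j' < t - 1, q' j = q j')
    (h : VLineSep q t) : VLineSep q' t' := by
  rcases h with ⟨h1, h2⟩ | ⟨h1, h2⟩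
  · refine Or.inl ⟨by rw [hc, hp]; exact h1, ?_⟩
    intro j hj; obtain ⟨j', hj', e⟩ := hf j hj; rw [e, hc]; exact h2 j' hj'
  · refine Or.inr ⟨by rw [hc, hp]; exact h1, ?_⟩
    intro j hj; obtain ⟨j', hj', e⟩ := hf j hj; rw [e, hc]; exact h2 j' hj'

lemma HLineSep_transfer {q q' : ℕ → Point} {t t' : ℕ}
    (hc : q' t' = q t) (hp : q' (t' - 1) = q (t - 1))
    (hf : ∀ j < t' - 1, ∃ j' < t - 1, q' j = q j')
    (h : HLineSep q t) : HLineSep q' t' := by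
  rcases h with ⟨h1, h2⟩ | ⟨h1, h2⟩
  · refine Or.inl ⟨by rw [hc, hp]; exact h1, ?_⟩
    intro j hj; obtain ⟨j', hj', e⟩ := hf j hj; rw [e, hc]; exact h2 j' hj'
  · refine Or.inr ⟨by rw [hc, hp]; exact h1, ?_⟩
    intro j hj; obtain ⟨j', hj', e⟩ := hf j hj; rw [e, hc]; exact h2 j' hj'

lemma SepCond_transfer {q q' : ℕ → Point} {t t' : ℕ}
    (hc : q' t' = q t) (hp : q' (t' - 1) = q (t - 1))
    (hf : ∀ j < t' - 1, ∃ j' < t - 1, q' j = q j')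
    (h : SepCond q t) : SepCond q' t' := by
  rcases h with h | h
  · exact Or.inl (VLineSep_transfer hc hp hf h)
  · exact Or.inr (HLineSep_transfer hc hp hf h)

lemma IndepCond_transfer {q q' : ℕ → Point} {t t' : ℕ}
    (hc : q' t' = q t) (hf : ∀ j < t', ∃ j' < t, q' j = q j')
    (h : IndepCond q t) : IndepCond q' t' := by
  constructor
  · rintro ⟨⟨j1, hj1, hl1⟩, ⟨j2, hj2, hl2⟩⟩
    obtain ⟨j1', hj1', e1⟩ := hf j1 hj1
    obtain ⟨j2', hj2', e2⟩ := hf j2 hj2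
    exact h.1 ⟨⟨j1', hj1', by rw [e1, hc] at hl1; exact hl1⟩,
      ⟨j2', hj2', by rw [e2, hc] at hl2; exact hl2⟩⟩
  · rintro ⟨⟨j1, hj1, hl1⟩, ⟨j2, hj2, hl2⟩⟩
    obtain ⟨j1', hj1', e1⟩ := hf j1 hj1
    obtain ⟨j2', hj2', e2⟩ := hf j2 hj2
    exact h.2 ⟨⟨j1', hj1', by rw [e1, hc] at hl1; exact hl1⟩,
      ⟨j2', hj2', by rw [e2, hc] at hl2; exact hl2⟩⟩

lemma LetterIs_transfer {q q' : ℕ → Point} {t t' : ℕ} {x : Letter}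
    (hc : q' t' = q t) (hp : q' (t' - 1) = q (t - 1))
    (hf : ∀ j < t', ∃ j' < t, q' j = q j')
    (hfs : ∀ j < t' - 1, ∃ j' < t - 1, q' j = q j')
    (h2 : x.isNum = false → 2 ≤ t')
    (h : LetterIs q t x) : LetterIs q' t' x := by
  cases x with
  | U => exact ⟨h2 rfl, SepCond_transfer hc hp hfs h.2.1, AboveAll_transfer hc hf h.2.2⟩
  | D => exact ⟨h2 rfl, SepCond_transfer hc hp hfs h.2.1, BelowAll_transfer hc hf h.2.2⟩
  | L => exact ⟨h2 rfl, SepCond_transfer hc hp hfs h.2.1, LeftAll_transfer hc hf h.2.2⟩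
  | R => exact ⟨h2 rfl, SepCond_transfer hc hp hfs h.2.1, RightAll_transfer hc hf h.2.2⟩
  | n1 => exact ⟨IndepCond_transfer hc hf h.1, RightAll_transfer hc hf h.2.1,
      AboveAll_transfer hc hf h.2.2⟩
  | n2 => exact ⟨IndepCond_transfer hc hf h.1, LeftAll_transfer hc hf h.2.1,
      AboveAll_transfer hc hf h.2.2⟩
  | n3 => exact ⟨IndepCond_transfer hc hf h.1, LeftAll_transfer hc hf h.2.1,
      BelowAll_transfer hc hf h.2.2⟩
  | n4 => exact ⟨IndepCond_transfer hc hf h.1, RightAll_transfer hc hf h.2.1,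
      BelowAll_transfer hc hf h.2.2⟩

end Aux


section Geom

lemma hsep_of_letterR {q : ℕ → Point} {t : ℕ} (h : LetterIs q t Letter.R) :
    HLineSep q t := by
  obtain ⟨h2, hsep, hr⟩ := h
  rcases hsep with hv | hh
  · exfalso
    rcases hv with ⟨_, hall⟩ | ⟨hlt, _⟩
    · have h1 := hall 0 (by omega)
      have h2 := hr 0 (by omega)
      linarith
    · have := hr (t - 1) (by omega)
      linarith
  · exact hh

lemma hsep_of_letterL {q : ℕ → Point} {t : ℕ} (h : LetterIs q t Letter.L) :
    HLineSep q t := by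
  obtain ⟨h2, hsep, hr⟩ := h
  rcases hsep with hv | hh
  · exfalso
    rcases hv with ⟨hlt, _⟩ | ⟨_, hall⟩
    · have := hr (t - 1) (by omega)
      linarith
    · have h1 := hall 0 (by omega)
      have h2 := hr 0 (by omega)
      linarith
  · exact hh

lemma vsep_of_letterU {q : ℕ → Point} {t : ℕ} (h : LetterIs q t Letter.U) :
    VLineSep q t := by
  obtain ⟨h2, hsep, hr⟩ := h
  rcases hsep with hv | hh
  · exact hv
  · exfalso
    rcases hh with ⟨_, hall⟩ | ⟨hlt, _⟩
    · have h1 := hall 0 (by omega)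
      have h2 := hr 0 (by omega)
      linarith
    · have := hr (t - 1) (by omega)
      linarith

lemma vsep_of_letterD {q : ℕ → Point} {t : ℕ} (h : LetterIs q t Letter.D) :
    VLineSep q t := by
  obtain ⟨h2, hsep, hr⟩ := h
  rcases hsep with hv | hh
  · exact hv
  · exfalso
    rcases hh with ⟨hlt, _⟩ | ⟨_, hall⟩
    · have := hr (t - 1) (by omega)
      linarith
    · have h1 := hall 0 (by omega)
      have h2 := hr 0 (by omega)
      linarith

lemma not_hsep_hsep {q : ℕ → Point} {t : ℕ} (h2 : 2 ≤ t)
    (ha : HLineSep q t) (hb : HLineSep q (t + 1)) : False := by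
  have e : t + 1 - 1 = t := rfl
  rw [HLineSep, e] at hb
  rcases ha with ⟨a1, a2⟩ | ⟨a1, a2⟩ <;> rcases hb with ⟨b1, b2⟩ | ⟨b1, b2⟩
  · have := b2 (t - 1) (by omega)
    linarith
  · have h0 := b2 0 (by omega)
    have h0' := a2 0 (by omega)
    linarith
  · have h0 := b2 0 (by omega)
    have h0' := a2 0 (by omega)
    linarith
  · have := b2 (t - 1) (by omega)
    linarith

lemma not_vsep_vsep {q : ℕ → Point} {t : ℕ} (h2 : 2 ≤ t)
    (ha : VLineSep q t) (hb : VLineSep q (t + 1)) : False := by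
  have e : t + 1 - 1 = t := rfl
  rw [VLineSep, e] at hb
  rcases ha with ⟨a1, a2⟩ | ⟨a1, a2⟩ <;> rcases hb with ⟨b1, b2⟩ | ⟨b1, b2⟩
  · have := b2 (t - 1) (by omega)
    linarith
  · have h0 := b2 0 (by omega)
    have h0' := a2 0 (by omega)
    linarith
  · have h0 := b2 0 (by omega)
    have h0' := a2 0 (by omega)
    linarith
  · have := b2 (t - 1) (by omega)
    linarith

lemma alternation {q : ℕ → Point} {a b : Letter} {t : ℕ}
    (ha : LetterIs q t a) (hb : LetterIs q (t + 1) b)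
    (hda : a.IsDirection) (hdb : b.IsDirection) : Perp a b := by
  have hda' : a.isNum = false := hda
  have hdb' : b.isNum = false := hdb
  have h2 : 2 ≤ t := by
    cases a <;> first
      | exact absurd hda' (by decide)
      | exact ha.1
  cases a <;> cases b <;>
    first
      | exact absurd hda' (by decide)
      | exact absurd hdb' (by decide)
      | exact absurd (not_hsep_hsep h2
          (by first | exact hsep_of_letterR ha | exact hsep_of_letterL ha)
          (by first | exact hsep_of_letterR hb | exact hsep_of_letterL hb)) not_false
      | exact absurd (not_vsep_vsep h2
          (by first | exact vsep_of_letterU ha | exact vsep_of_letterD ha)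
          (by first | exact vsep_of_letterU hb | exact vsep_of_letterD hb)) not_false
      | decide

lemma word_alternation {q : ℕ → Point} {N : ℕ} {u : List Letter} (hw : WordOf q N u)
    {ℓ : ℕ} (hℓ : ℓ + 1 < N) (hda : (u.getD ℓ Letter.U).IsDirection)
    (hdb : (u.getD (ℓ + 1) Letter.U).IsDirection) :
    Perp (u.getD ℓ Letter.U) (u.getD (ℓ + 1) Letter.U) :=
  alternation (hw.2 ℓ (by omega)) (hw.2 (ℓ + 1) hℓ) hda hdb

/-- Dropping the origin from a pin sequence yields a pin sequence. -/
lemma isPinSeq_of_withOrigin {p0 : Point} {p : ℕ → Point} {m : ℕ}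
    (h : IsPinSeq (withOrigin p0 p) (m + 1)) : IsPinSeq p m := by
  constructor
  · intro i hi j hj hij
    have := h.1 (i + 1) (by omega) (j + 1) (by omega) (by omega)
    exact this
  · intro i h1 hi
    have key := h.2 (i + 1) (by omega) (by omega)
    have hc : p i = withOrigin p0 p (i + 1) := rfl
    have hf : ∀ j < i, ∃ j' < i + 1, p j = withOrigin p0 p j' :=
      fun j hj => ⟨j + 1, by omega, rfl⟩
    have hp : p (i - 1) = withOrigin p0 p (i + 1 - 1) := by
      have : i + 1 - 1 = (i - 1) + 1 := by omega
      rw [this]; rfl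
    have hfs : ∀ j < i - 1, ∃ j' < i + 1 - 1, p j = withOrigin p0 p j' :=
      fun j hj => ⟨j + 1, by omega, rfl⟩
    refine ⟨OutsideBox_transfer hc hf key.1, ?_⟩
    rcases key.2 with hs | hind
    · exact Or.inl (SepCond_transfer hc hp hfs hs)
    · exact Or.inr (IndepCond_transfer hc hf hind)

end Geom


section Lang

/-- The modification of the tail of the word after deleting a letter `c`. -/
def modif (c : Letter) : List Letter → List Letter
  | [] => []
  | d :: rest => (if d.isNum then d else quadNum c d) :: rest

lemma interleave_cons (v w : List Letter) (vs ws : List (List Letter)) :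
    interleave (v :: vs) (w :: ws) = v ++ w ++ interleave vs ws := rfl

lemma interleave_append_head (x y : List Letter) (vs ws : List (List Letter)) :
    interleave ((x ++ y) :: vs) ws = x ++ interleave (y :: vs) ws := by
  cases ws <;> simp [interleave]

lemma interleave_cons_push (c : Letter) (v : List Letter) (vs ws : List (List Letter)) :
    interleave ((c :: v) :: vs) ws = c :: interleave (v :: vs) ws := by
  cases ws <;> simp [interleave]

lemma LangOf_prepend {s r w v t : List Letter} (hs : IsStrict s) (hw : w ∈ phiSet s)
    (hv : v ∈ Astar) (ht : t ∈ LangOf r) : v ++ (w ++ t) ∈ LangOf (s ++ r) := by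
  obtain ⟨us, ⟨hfl, hstr⟩, vs, ws, hlw, hlv, hteq, hA, hphi⟩ := ht
  refine ⟨s :: us, ⟨by simp [hfl], ?_⟩, v :: vs, w :: ws, by simp [hlw],
    by simp [hlv], ?_, ?_, ?_⟩
  · intro x hx
    rcases List.mem_cons.mp hx with rfl | hx
    · exact hs
    · exact hstr x hx
  · obtain ⟨v1, vs', rfl⟩ : ∃ v1 vs', vs = v1 :: vs' := by
      cases vs
      · simp at hlv
      · exact ⟨_, _, rfl⟩
    rw [interleave_cons, hteq]
    simp [List.append_assoc]
  · intro x hx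
    rcases List.mem_cons.mp hx with rfl | hx
    · exact hv
    · exact hA x hx
  · intro i hi
    cases i with
    | zero => simpa using hw
    | succ i => simpa using hphi i (by simpa using Nat.lt_of_succ_lt_succ hi)

lemma lang_aux (c : Letter) (rest : List Letter)
    (hP1 : ∀ d rest', rest = d :: rest' → c.IsDirection → d.IsDirection → Perp c d)
    (hP2 : ∀ d t rest', rest = d :: t :: rest' → d.IsDirection → t.IsDirection → Perp d t) :
    ∀ (us vs ws : List (List Letter)) (u₁ : List Letter),
    us.flatten = u₁ ++ c :: rest →
    (∀ v ∈ us, IsStrict v) →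
    ws.length = us.length → vs.length = us.length + 1 →
    (∀ v ∈ vs, v ∈ Astar) →
    (∀ i < us.length, ws.getD i [] ∈ phiSet (us.getD i [])) →
    interleave vs ws ∈ LangOf (u₁ ++ modif c rest) := by
  intro us
  induction us with
  | nil =>
    intro vs ws u₁ hfl _ _ _ _ _
    simp only [List.flatten_nil] at hfl
    exact absurd hfl.symm (by simp)
  | cons s ust IH =>
    intro vs ws u₁ hfl hstr hlw hlv hA hphi
    obtain ⟨w₀, wst, rfl⟩ : ∃ w₀ wst, ws = w₀ :: wst := by
      cases ws
      · simp at hlw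
      · exact ⟨_, _, rfl⟩
    obtain ⟨v₀, vst, rfl⟩ : ∃ v₀ vst, vs = v₀ :: vst := by
      cases vs
      · simp at hlv
      · exact ⟨_, _, rfl⟩
    obtain ⟨v₁, vstt, rfl⟩ : ∃ v₁ vstt, vst = v₁ :: vstt := by
      cases vst
      · simp at hlv
      · exact ⟨_, _, rfl⟩
    simp only [List.flatten_cons] at hfl
    obtain ⟨c₀, ds, rfl, hc₀, hds⟩ := hstr s (by simp)
    have hc₀' : c₀.isNum = true := hc₀
    have hw₀ : w₀ ∈ phiSet (c₀ :: ds) := by simpa using hphi 0 (by simp)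
    have hlw' : wst.length = ust.length := by simpa using hlw
    have hlv' : (v₁ :: vstt).length = ust.length + 1 := by simpa using hlv
    have hA' : ∀ v ∈ v₁ :: vstt, v ∈ Astar := fun v hv => hA v (by simp [hv])
    have hAv₀ : v₀ ∈ Astar := hA v₀ (by simp)
    have hAv₁ : v₁ ∈ Astar := hA v₁ (by simp)
    have hstr' : ∀ v ∈ ust, IsStrict v := fun v hv => hstr v (by simp [hv])
    have hphi' : ∀ i < ust.length, wst.getD i [] ∈ phiSet (ust.getD i []) := by
      intro i hi
      simpa using hphi (i + 1) (by simpa using Nat.succ_lt_succ hi)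
    by_cases hlen : (c₀ :: ds).length ≤ u₁.length
    · -- the deleted letter is beyond the first factor: recurse
      have hsplit : ∃ u₁', u₁ = (c₀ :: ds) ++ u₁' ∧ ust.flatten = u₁' ++ c :: rest := by
        rcases List.append_eq_append_iff.mp hfl with ⟨a', ha1, ha2⟩ | ⟨c', hc1, hc2⟩
        · exact ⟨a', ha1, ha2⟩
        · have hl1 := congrArg List.length hc1
          simp only [List.length_append] at hl1
          have hc'nil : c' = [] := List.eq_nil_of_length_eq_zero (by omega)
          subst hc'nil
          refine ⟨[], ?_, ?_⟩
          · simp only [List.append_nil] at hc1 ⊢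
            exact hc1.symm
          · simpa using hc2.symm
      obtain ⟨u₁', rfl, hfl'⟩ := hsplit
      have hmem := IH (v₁ :: vstt) wst u₁' hfl' hstr' hlw' hlv' hA' hphi'
      have := LangOf_prepend ⟨c₀, ds, rfl, hc₀, hds⟩ hw₀ hAv₀ hmem
      rw [interleave_cons]
      simpa [List.append_assoc] using this
    · -- the deleted letter is inside the first factor: surgery
      push_neg at hlen
      obtain ⟨s₂, hc1, hrest⟩ : ∃ s₂, c₀ :: ds = u₁ ++ c :: s₂ ∧
          rest = s₂ ++ ust.flatten := by
        rcases List.append_eq_append_iff.mp hfl with ⟨a', ha1, ha2⟩ | ⟨c', hc1, hc2⟩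
        · exfalso
          have := congrArg List.length ha1
          simp only [List.length_append] at this
          omega
        · cases c' with
          | nil =>
            exfalso
            have := congrArg List.length hc1
            simp only [List.length_append, List.length_nil] at this
            omega
          | cons ch s₂ =>
            injection hc2 with e1 e2
            subst e1
            exact ⟨s₂, hc1, e2⟩
      clear hfl hlen
      cases u₁ with
      | nil =>
        -- the deleted letter is the leading numeral of the factor
        simp only [List.nil_append] at hc1 ⊢
        injection hc1 with e1 e2
        rw [e1] at hc₀'
        rw [e1, e2] at hw₀
        rw [e2] at hds
        have hcnum : c.isNum = true := hc₀'
        cases s₂ with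
        | nil =>
          -- factor was a single numeral
          have hw₀' : w₀ ∈ phi1 c := by simpa [phiSet, hcnum] using hw₀
          have hw₀A : w₀ ∈ Astar := fun a ha => phi1_dir hw₀' a ha
          cases ust with
          | nil =>
            -- nothing left at all
            have hwst : wst = [] := List.eq_nil_of_length_eq_zero (by simpa using hlw')
            have hvstt : vstt = [] := List.eq_nil_of_length_eq_zero (by simpa using hlv')
            subst hwst hvstt
            have hrnil : rest = [] := by simpa using hrest
            subst hrnil
            refine ⟨[], ⟨rfl, by simp⟩, [interleave [v₀, v₁] [w₀]], [], rfl, rfl, ?_, ?_, ?_⟩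
            · simp [interleave, modif]
            · intro x hx
              rcases List.mem_singleton.mp hx with rfl
              intro a ha
              simp only [interleave, List.append_nil, List.mem_append] at ha
              rcases ha with (ha | ha) | ha
              · exact hAv₀ a ha
              · exact hw₀A a ha
              · exact hAv₁ a ha
            · intro i hi
              simp at hi
          | cons s' ustt =>
            -- the next factor starts with a numeral; the singleton factor merges away
            obtain ⟨e, es, hs'eq, he, hes⟩ := hstr' s' (by simp)
            have he' : e.isNum = true := he
            have hmod : modif c rest = rest := by
              rw [hrest, hs'eq]
              simp [modif, he']
            rw [hmod, hrest]
            refine ⟨s' :: ustt, ⟨by simp, hstr'⟩, (v₀ ++ w₀ ++ v₁) :: vstt, wst,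
              hlw', by simpa using hlv', ?_, ?_, ?_⟩
            · rw [interleave_cons, interleave_append_head]
            · intro x hx
              rcases List.mem_cons.mp hx with rfl | hx
              · exact astar_append (astar_append hAv₀ hw₀A) hAv₁
              · exact hA' x (by simp [hx])
            · exact hphi'
        | cons d' s₃ =>
          -- factor = c :: d' :: s₃ with c numeral; becomes (quadNum c d') :: s₃
          have hd' : d'.IsDirection := hds d' (by simp)
          have hd'' : d'.isNum = false := hd'
          obtain ⟨x, y, hphi2, hxd, hyd, hxy1, hyd1, hpyd, hqnum⟩ := LF1 hcnum hd''
          have hw₀' : w₀ = phi2 c d' ++ s₃ := by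
            simpa [phiSet, hcnum] using hw₀
          have hmod : modif c rest = quadNum c d' :: (s₃ ++ ust.flatten) := by
            rw [hrest]
            simp [modif, hd'']
          rw [hmod]
          have hs₃d : ∀ a ∈ s₃, a.IsDirection := fun a ha => hds a (by simp [ha])
          have hnewphi : (y :: d' :: s₃) ∈ phiSet (quadNum c d' :: s₃) := by
            cases s₃ with
            | nil => simpa [phiSet, hqnum] using hyd1
            | cons t₁ s₄ =>
              have ht₁ : t₁.IsDirection := hs₃d t₁ (by simp)
              have hperp : Perp d' t₁ := hP2 d' t₁ (s₄ ++ ust.flatten)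
                (by rw [hrest]; simp) hd' ht₁
              have h3 := LF3 hyd1 hperp
              simp only [phiSet, hqnum]
              simp [h3]
          refine ⟨(quadNum c d' :: s₃) :: ust, ⟨by simp, ?_⟩,
            (v₀ ++ [x]) :: v₁ :: vstt, (y :: d' :: s₃) :: wst,
            by simpa using hlw', by simpa using hlv', ?_, ?_, ?_⟩
          · intro v hv
            rcases List.mem_cons.mp hv with rfl | hv
            · exact ⟨quadNum c d', s₃, rfl, hqnum, hs₃d⟩
            · exact hstr' v hv
          · rw [interleave_cons, interleave_cons, hw₀', hphi2]
            simp [List.append_assoc]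
          · intro v hv
            rcases List.mem_cons.mp hv with rfl | hv
            · refine astar_append hAv₀ ?_
              intro a ha
              rcases List.mem_singleton.mp ha with rfl
              exact hxd
            · exact hA' v hv
          · intro i hi
            cases i with
            | zero => simpa using hnewphi
            | succ i => simpa using hphi' i (by simpa using Nat.lt_of_succ_lt_succ hi)
      | cons c₀' u₁d =>
        -- the deleted letter is a direction inside the factor
        injection hc1 with e1 e2
        rw [e2] at hds hw₀
        rw [e1] at hc₀ hc₀' hw₀
        clear e1 e2
        have hcdir : c.IsDirection := hds c (by simp)
        have hu₁dd : ∀ a ∈ u₁d, a.IsDirection := fun a ha => hds a (by simp [ha])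
        have hstrU : IsStrict (c₀' :: u₁d) := ⟨c₀', u₁d, rfl, hc₀, hu₁dd⟩
        have hcdir' : c.isNum = false := hcdir
        -- compute the split of w₀
        obtain ⟨w₁', hw₁'phi, hw₀split⟩ : ∃ w₁', w₁' ∈ phiSet (c₀' :: u₁d) ∧
            w₀ = w₁' ++ (c :: s₂) := by
          cases u₁d with
          | nil =>
            obtain ⟨x, y, hphi2, hxd, hyd, hxy1, h5, h6, h7⟩ := LF1 hc₀' hcdir'
            have hw₀' : w₀ = phi2 c₀' c ++ s₂ := by
              simpa [phiSet, hc₀'] using hw₀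
            refine ⟨[x, y], by simpa [phiSet, hc₀'] using hxy1, ?_⟩
            rw [hw₀', hphi2]
            simp
          | cons d₁ es =>
            have hw₀' : w₀ = phi2 c₀' d₁ ++ (es ++ c :: s₂) := by
              simpa [phiSet, hc₀'] using hw₀
            refine ⟨phi2 c₀' d₁ ++ es, by simp [phiSet, hc₀'], ?_⟩
            rw [hw₀']
            simp [List.append_assoc]
        cases s₂ with
        | nil =>
          -- deleted letter ends the factor
          have hmod : modif c rest = ust.flatten := by
            rw [hrest]
            simp only [List.nil_append]
            cases ust with
            | nil => simp [modif]
            | cons s' ustt =>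
              obtain ⟨e, es, hs'eq, he, hes⟩ := hstr' s' (by simp)
              have he' : e.isNum = true := he
              rw [hs'eq]
              simp [modif, he']
          rw [hmod]
          refine ⟨(c₀' :: u₁d) :: ust, ⟨by simp, ?_⟩,
            v₀ :: (c :: v₁) :: vstt, w₁' :: wst,
            by simpa using hlw', by simpa using hlv', ?_, ?_, ?_⟩
          · intro v hv
            rcases List.mem_cons.mp hv with rfl | hv
            · exact hstrU
            · exact hstr' v hv
          · rw [interleave_cons, interleave_cons, interleave_cons_push, hw₀split]
            simp [List.append_assoc]
          · intro v hv
            rcases List.mem_cons.mp hv with rfl | hv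
            · exact hAv₀
            · rcases List.mem_cons.mp hv with rfl | hv
              · intro a ha
                rcases List.mem_cons.mp ha with rfl | ha
                · exact hcdir
                · exact hAv₁ a ha
              · exact hA' v (by simp [hv])
          · intro i hi
            cases i with
            | zero => simpa using hw₁'phi
            | succ i => simpa using hphi' i (by simpa using Nat.lt_of_succ_lt_succ hi)
        | cons d' s₃ =>
          -- the factor splits in two
          have hd' : d'.IsDirection := hds d' (by simp)
          have hd'' : d'.isNum = false := hd'
          have hperpcd : Perp c d' := hP1 d' (s₃ ++ ust.flatten)
            (by rw [hrest]; simp) hcdir hd'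
          obtain ⟨hcd1, hqnum⟩ := LF2 hperpcd
          have hs₃d : ∀ a ∈ s₃, a.IsDirection := fun a ha => hds a (by simp [ha])
          have hmod : modif c rest = quadNum c d' :: (s₃ ++ ust.flatten) := by
            rw [hrest]
            simp [modif, hd'']
          rw [hmod]
          have hnewphi : (c :: d' :: s₃) ∈ phiSet (quadNum c d' :: s₃) := by
            cases s₃ with
            | nil => simpa [phiSet, hqnum] using hcd1
            | cons t₁ s₄ =>
              have ht₁ : t₁.IsDirection := hs₃d t₁ (by simp)
              have hperp : Perp d' t₁ := hP2 d' t₁ (s₄ ++ ust.flatten)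
                (by rw [hrest]; simp) hd' ht₁
              have h3 := LF3 hcd1 hperp
              simp only [phiSet, hqnum]
              simp [h3]
          refine ⟨(c₀' :: u₁d) :: (quadNum c d' :: s₃) :: ust, ⟨by simp, ?_⟩,
            v₀ :: [] :: v₁ :: vstt, w₁' :: (c :: d' :: s₃) :: wst,
            by simpa using hlw', by simpa using hlv', ?_, ?_, ?_⟩
          · intro v hv
            rcases List.mem_cons.mp hv with rfl | hv
            · exact hstrU
            · rcases List.mem_cons.mp hv with rfl | hv
              · exact ⟨quadNum c d', s₃, rfl, hqnum, hs₃d⟩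
              · exact hstr' v hv
          · rw [interleave_cons, interleave_cons, interleave_cons, hw₀split]
            simp [List.append_assoc]
          · intro v hv
            rcases List.mem_cons.mp hv with rfl | hv
            · exact hAv₀
            · rcases List.mem_cons.mp hv with rfl | hv
              · intro a ha
                simp at ha
              · exact hA' v hv
          · intro i hi
            cases i with
            | zero => simpa using hw₁'phi
            | succ i =>
              cases i with
              | zero => simpa using hnewphi
              | succ i =>
                have hi' : i < ust.length := by
                  simpa using Nat.lt_of_succ_lt_succ (Nat.lt_of_succ_lt_succ hi)
                simpa using hphi' i hi'

lemma lang_step {u : List Letter} {ℓ : ℕ} (hℓ : ℓ < u.length)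
    (hP1 : ∀ d rest', u.drop (ℓ + 1) = d :: rest' →
      (u.getD ℓ Letter.U).IsDirection → d.IsDirection → Perp (u.getD ℓ Letter.U) d)
    (hP2 : ∀ d t rest', u.drop (ℓ + 1) = d :: t :: rest' →
      d.IsDirection → t.IsDirection → Perp d t) :
    LangOf u ⊆ LangOf (u.take ℓ ++ modif (u.getD ℓ Letter.U) (u.drop (ℓ + 1))) := by
  intro m hm
  obtain ⟨us, ⟨hfl, hstr⟩, vs, ws, hlw, hlv, hmeq, hA, hphi⟩ := hm
  have hu : u = u.take ℓ ++ (u.getD ℓ Letter.U) :: u.drop (ℓ + 1) := by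
    conv_lhs => rw [← List.take_append_drop ℓ u]
    congr 1
    rw [List.drop_eq_getElem_cons hℓ]
    congr 1
    exact (List.getD_eq_getElem u _ hℓ).symm
  rw [hmeq]
  exact lang_aux _ _ hP1 hP2 us vs ws _ (by rw [hfl, ← hu]) hstr hlw hlv hA hphi

end Lang


section Del

lemma indep_of_extremes {q : ℕ → Point} {t : ℕ}
    (hx : RightAll q t ∨ LeftAll q t) (hy : AboveAll q t ∨ BelowAll q t) :
    IndepCond q t := by
  constructor
  · rintro ⟨⟨j1, hj1, h1⟩, ⟨j2, hj2, h2⟩⟩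
    rcases hx with hx | hx
    · have := hx j2 hj2; linarith
    · have := hx j1 hj1; linarith
  · rintro ⟨⟨j1, hj1, h1⟩, ⟨j2, hj2, h2⟩⟩
    rcases hy with hy | hy
    · have := hy j2 hj2; linarith
    · have := hy j1 hj1; linarith

lemma letter_two_le {q : ℕ → Point} {t : ℕ} {x : Letter}
    (hxd : x.isNum = false) (h : LetterIs q t x) : 2 ≤ t := by
  cases x <;> first
    | exact absurd hxd (by decide)
    | exact h.1

lemma letter_indep_of_num {q : ℕ → Point} {t : ℕ} {x : Letter}
    (hxn : x.isNum = true) (h : LetterIs q t x) : IndepCond q t := by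
  cases x <;> first
    | exact absurd hxn (by decide)
    | exact h.1

lemma quadNum_isNum (c d : Letter) : (quadNum c d).isNum = true := by
  cases c <;> cases d <;> decide

lemma LetterIs_transfer_num {q q' : ℕ → Point} {t t' : ℕ} {x : Letter}
    (hc : q' t' = q t) (hf : ∀ j < t', ∃ j' < t, q' j = q j')
    (hxn : x.isNum = true) (h : LetterIs q t x) : LetterIs q' t' x := by
  cases x with
  | n1 => exact ⟨IndepCond_transfer hc hf h.1, RightAll_transfer hc hf h.2.1,
      AboveAll_transfer hc hf h.2.2⟩
  | n2 => exact ⟨IndepCond_transfer hc hf h.1, LeftAll_transfer hc hf h.2.1,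
      AboveAll_transfer hc hf h.2.2⟩
  | n3 => exact ⟨IndepCond_transfer hc hf h.1, LeftAll_transfer hc hf h.2.1,
      BelowAll_transfer hc hf h.2.2⟩
  | n4 => exact ⟨IndepCond_transfer hc hf h.1, RightAll_transfer hc hf h.2.1,
      BelowAll_transfer hc hf h.2.2⟩
  | U => exact absurd hxn (by decide)
  | D => exact absurd hxn (by decide)
  | L => exact absurd hxn (by decide)
  | R => exact absurd hxn (by decide)

lemma key_R {q q' : ℕ → Point} {ℓ : ℕ} {c : Letter}
    (hq'lo : ∀ j < ℓ + 1, q' j = q j) (hq'hi : q' (ℓ + 1) = q (ℓ + 2))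
    (hcL : LetterIs q (ℓ + 1) c) (hdL : LetterIs q (ℓ + 2) Letter.R) :
    LetterIs q' (ℓ + 1) (quadNum c Letter.R) := by
  have hH0 := hsep_of_letterR hdL
  have hExq : RightAll q (ℓ + 2) := hdL.2.2
  have hEx : RightAll q' (ℓ + 1) := by
    intro j hj
    rw [hq'lo j hj, hq'hi]
    exact hExq j (by omega)
  have hH : ((q (ℓ + 1)).2 < (q (ℓ + 2)).2 ∧ ∀ j < ℓ + 1, (q (ℓ + 2)).2 < (q j).2) ∨
      ((q (ℓ + 2)).2 < (q (ℓ + 1)).2 ∧ ∀ j < ℓ + 1, (q j).2 < (q (ℓ + 2)).2) := hH0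
  rcases hH with ⟨o1, o2⟩ | ⟨o1, o2⟩
  · have hOr : BelowAll q' (ℓ + 1) := by
      intro j hj
      rw [hq'lo j hj, hq'hi]
      exact o2 j hj
    have hDel : BelowAll q (ℓ + 1) := fun j hj => lt_trans o1 (o2 j hj)
    have hind : IndepCond q' (ℓ + 1) := indep_of_extremes (Or.inl hEx) (Or.inr hOr)
    cases c with
    | n1 =>
      have ha := hcL.2.2 0 (by omega)
      have hb := hDel 0 (by omega)
      exact absurd ha (by simp only [not_lt]; linarith)
    | n2 =>
      have ha := hcL.2.2 0 (by omega)
      have hb := hDel 0 (by omega)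
      exact absurd ha (by simp only [not_lt]; linarith)
    | n3 =>
      rw [(by decide : quadNum Letter.n3 Letter.R = Letter.n4)]
      exact ⟨hind, hEx, hOr⟩
    | n4 =>
      rw [(by decide : quadNum Letter.n4 Letter.R = Letter.n4)]
      exact ⟨hind, hEx, hOr⟩
    | U =>
      have ha := hcL.2.2 0 (by omega)
      have hb := hDel 0 (by omega)
      exact absurd ha (by simp only [not_lt]; linarith)
    | D =>
      rw [(by decide : quadNum Letter.D Letter.R = Letter.n4)]
      exact ⟨hind, hEx, hOr⟩
    | L => exact ((not_hsep_hsep hcL.1 (hsep_of_letterL hcL) hH0)).elim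
    | R => exact ((not_hsep_hsep hcL.1 (hsep_of_letterR hcL) hH0)).elim
  · have hOr : AboveAll q' (ℓ + 1) := by
      intro j hj
      rw [hq'lo j hj, hq'hi]
      exact o2 j hj
    have hDel : AboveAll q (ℓ + 1) := fun j hj => lt_trans (o2 j hj) o1
    have hind : IndepCond q' (ℓ + 1) := indep_of_extremes (Or.inl hEx) (Or.inl hOr)
    cases c with
    | n1 =>
      rw [(by decide : quadNum Letter.n1 Letter.R = Letter.n1)]
      exact ⟨hind, hEx, hOr⟩
    | n2 =>
      rw [(by decide : quadNum Letter.n2 Letter.R = Letter.n1)]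
      exact ⟨hind, hEx, hOr⟩
    | n3 =>
      have ha := hcL.2.2 0 (by omega)
      have hb := hDel 0 (by omega)
      exact absurd ha (by simp only [not_lt]; linarith)
    | n4 =>
      have ha := hcL.2.2 0 (by omega)
      have hb := hDel 0 (by omega)
      exact absurd ha (by simp only [not_lt]; linarith)
    | U =>
      rw [(by decide : quadNum Letter.U Letter.R = Letter.n1)]
      exact ⟨hind, hEx, hOr⟩
    | D =>
      have ha := hcL.2.2 0 (by omega)
      have hb := hDel 0 (by omega)
      exact absurd ha (by simp only [not_lt]; linarith)
    | L => exact ((not_hsep_hsep hcL.1 (hsep_of_letterL hcL) hH0)).elim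
    | R => exact ((not_hsep_hsep hcL.1 (hsep_of_letterR hcL) hH0)).elim

lemma key_L {q q' : ℕ → Point} {ℓ : ℕ} {c : Letter}
    (hq'lo : ∀ j < ℓ + 1, q' j = q j) (hq'hi : q' (ℓ + 1) = q (ℓ + 2))
    (hcL : LetterIs q (ℓ + 1) c) (hdL : LetterIs q (ℓ + 2) Letter.L) :
    LetterIs q' (ℓ + 1) (quadNum c Letter.L) := by
  have hH0 := hsep_of_letterL hdL
  have hExq : LeftAll q (ℓ + 2) := hdL.2.2
  have hEx : LeftAll q' (ℓ + 1) := by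
    intro j hj
    rw [hq'lo j hj, hq'hi]
    exact hExq j (by omega)
  have hH : ((q (ℓ + 1)).2 < (q (ℓ + 2)).2 ∧ ∀ j < ℓ + 1, (q (ℓ + 2)).2 < (q j).2) ∨
      ((q (ℓ + 2)).2 < (q (ℓ + 1)).2 ∧ ∀ j < ℓ + 1, (q j).2 < (q (ℓ + 2)).2) := hH0
  rcases hH with ⟨o1, o2⟩ | ⟨o1, o2⟩
  · have hOr : BelowAll q' (ℓ + 1) := by
      intro j hj
      rw [hq'lo j hj, hq'hi]
      exact o2 j hj
    have hDel : BelowAll q (ℓ + 1) := fun j hj => lt_trans o1 (o2 j hj)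
    have hind : IndepCond q' (ℓ + 1) := indep_of_extremes (Or.inr hEx) (Or.inr hOr)
    cases c with
    | n1 =>
      have ha := hcL.2.2 0 (by omega)
      have hb := hDel 0 (by omega)
      exact absurd ha (by simp only [not_lt]; linarith)
    | n2 =>
      have ha := hcL.2.2 0 (by omega)
      have hb := hDel 0 (by omega)
      exact absurd ha (by simp only [not_lt]; linarith)
    | n3 =>
      rw [(by decide : quadNum Letter.n3 Letter.L = Letter.n3)]
      exact ⟨hind, hEx, hOr⟩
    | n4 =>
      rw [(by decide : quadNum Letter.n4 Letter.L = Letter.n3)]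
      exact ⟨hind, hEx, hOr⟩
    | U =>
      have ha := hcL.2.2 0 (by omega)
      have hb := hDel 0 (by omega)
      exact absurd ha (by simp only [not_lt]; linarith)
    | D =>
      rw [(by decide : quadNum Letter.D Letter.L = Letter.n3)]
      exact ⟨hind, hEx, hOr⟩
    | L => exact ((not_hsep_hsep hcL.1 (hsep_of_letterL hcL) hH0)).elim
    | R => exact ((not_hsep_hsep hcL.1 (hsep_of_letterR hcL) hH0)).elim
  · have hOr : AboveAll q' (ℓ + 1) := by
      intro j hj
      rw [hq'lo j hj, hq'hi]
      exact o2 j hj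
    have hDel : AboveAll q (ℓ + 1) := fun j hj => lt_trans (o2 j hj) o1
    have hind : IndepCond q' (ℓ + 1) := indep_of_extremes (Or.inr hEx) (Or.inl hOr)
    cases c with
    | n1 =>
      rw [(by decide : quadNum Letter.n1 Letter.L = Letter.n2)]
      exact ⟨hind, hEx, hOr⟩
    | n2 =>
      rw [(by decide : quadNum Letter.n2 Letter.L = Letter.n2)]
      exact ⟨hind, hEx, hOr⟩
    | n3 =>
      have ha := hcL.2.2 0 (by omega)
      have hb := hDel 0 (by omega)
      exact absurd ha (by simp only [not_lt]; linarith)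
    | n4 =>
      have ha := hcL.2.2 0 (by omega)
      have hb := hDel 0 (by omega)
      exact absurd ha (by simp only [not_lt]; linarith)
    | U =>
      rw [(by decide : quadNum Letter.U Letter.L = Letter.n2)]
      exact ⟨hind, hEx, hOr⟩
    | D =>
      have ha := hcL.2.2 0 (by omega)
      have hb := hDel 0 (by omega)
      exact absurd ha (by simp only [not_lt]; linarith)
    | L => exact ((not_hsep_hsep hcL.1 (hsep_of_letterL hcL) hH0)).elim
    | R => exact ((not_hsep_hsep hcL.1 (hsep_of_letterR hcL) hH0)).elim

lemma key_U {q q' : ℕ → Point} {ℓ : ℕ} {c : Letter}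
    (hq'lo : ∀ j < ℓ + 1, q' j = q j) (hq'hi : q' (ℓ + 1) = q (ℓ + 2))
    (hcL : LetterIs q (ℓ + 1) c) (hdL : LetterIs q (ℓ + 2) Letter.U) :
    LetterIs q' (ℓ + 1) (quadNum c Letter.U) := by
  have hH0 := vsep_of_letterU hdL
  have hExq : AboveAll q (ℓ + 2) := hdL.2.2
  have hEx : AboveAll q' (ℓ + 1) := by
    intro j hj
    rw [hq'lo j hj, hq'hi]
    exact hExq j (by omega)
  have hH : ((q (ℓ + 1)).1 < (q (ℓ + 2)).1 ∧ ∀ j < ℓ + 1, (q (ℓ + 2)).1 < (q j).1) ∨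
      ((q (ℓ + 2)).1 < (q (ℓ + 1)).1 ∧ ∀ j < ℓ + 1, (q j).1 < (q (ℓ + 2)).1) := hH0
  rcases hH with ⟨o1, o2⟩ | ⟨o1, o2⟩
  · have hOr : LeftAll q' (ℓ + 1) := by
      intro j hj
      rw [hq'lo j hj, hq'hi]
      exact o2 j hj
    have hDel : LeftAll q (ℓ + 1) := fun j hj => lt_trans o1 (o2 j hj)
    have hind : IndepCond q' (ℓ + 1) := indep_of_extremes (Or.inr hOr) (Or.inl hEx)
    cases c with
    | n1 =>
      have ha := hcL.2.1 0 (by omega)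
      have hb := hDel 0 (by omega)
      exact absurd ha (by simp only [not_lt]; linarith)
    | n2 =>
      rw [(by decide : quadNum Letter.n2 Letter.U = Letter.n2)]
      exact ⟨hind, hOr, hEx⟩
    | n3 =>
      rw [(by decide : quadNum Letter.n3 Letter.U = Letter.n2)]
      exact ⟨hind, hOr, hEx⟩
    | n4 =>
      have ha := hcL.2.1 0 (by omega)
      have hb := hDel 0 (by omega)
      exact absurd ha (by simp only [not_lt]; linarith)
    | U => exact ((not_vsep_vsep hcL.1 (vsep_of_letterU hcL) hH0)).elim
    | D => exact ((not_vsep_vsep hcL.1 (vsep_of_letterD hcL) hH0)).elim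
    | L =>
      rw [(by decide : quadNum Letter.L Letter.U = Letter.n2)]
      exact ⟨hind, hOr, hEx⟩
    | R =>
      have ha := hcL.2.2 0 (by omega)
      have hb := hDel 0 (by omega)
      exact absurd ha (by simp only [not_lt]; linarith)
  · have hOr : RightAll q' (ℓ + 1) := by
      intro j hj
      rw [hq'lo j hj, hq'hi]
      exact o2 j hj
    have hDel : RightAll q (ℓ + 1) := fun j hj => lt_trans (o2 j hj) o1
    have hind : IndepCond q' (ℓ + 1) := indep_of_extremes (Or.inl hOr) (Or.inl hEx)
    cases c with
    | n1 =>
      rw [(by decide : quadNum Letter.n1 Letter.U = Letter.n1)]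
      exact ⟨hind, hOr, hEx⟩
    | n2 =>
      have ha := hcL.2.1 0 (by omega)
      have hb := hDel 0 (by omega)
      exact absurd ha (by simp only [not_lt]; linarith)
    | n3 =>
      have ha := hcL.2.1 0 (by omega)
      have hb := hDel 0 (by omega)
      exact absurd ha (by simp only [not_lt]; linarith)
    | n4 =>
      rw [(by decide : quadNum Letter.n4 Letter.U = Letter.n1)]
      exact ⟨hind, hOr, hEx⟩
    | U => exact ((not_vsep_vsep hcL.1 (vsep_of_letterU hcL) hH0)).elim
    | D => exact ((not_vsep_vsep hcL.1 (vsep_of_letterD hcL) hH0)).elim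
    | L =>
      have ha := hcL.2.2 0 (by omega)
      have hb := hDel 0 (by omega)
      exact absurd ha (by simp only [not_lt]; linarith)
    | R =>
      rw [(by decide : quadNum Letter.R Letter.U = Letter.n1)]
      exact ⟨hind, hOr, hEx⟩

lemma key_D {q q' : ℕ → Point} {ℓ : ℕ} {c : Letter}
    (hq'lo : ∀ j < ℓ + 1, q' j = q j) (hq'hi : q' (ℓ + 1) = q (ℓ + 2))
    (hcL : LetterIs q (ℓ + 1) c) (hdL : LetterIs q (ℓ + 2) Letter.D) :
    LetterIs q' (ℓ + 1) (quadNum c Letter.D) := by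
  have hH0 := vsep_of_letterD hdL
  have hExq : BelowAll q (ℓ + 2) := hdL.2.2
  have hEx : BelowAll q' (ℓ + 1) := by
    intro j hj
    rw [hq'lo j hj, hq'hi]
    exact hExq j (by omega)
  have hH : ((q (ℓ + 1)).1 < (q (ℓ + 2)).1 ∧ ∀ j < ℓ + 1, (q (ℓ + 2)).1 < (q j).1) ∨
      ((q (ℓ + 2)).1 < (q (ℓ + 1)).1 ∧ ∀ j < ℓ + 1, (q j).1 < (q (ℓ + 2)).1) := hH0
  rcases hH with ⟨o1, o2⟩ | ⟨o1, o2⟩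
  · have hOr : LeftAll q' (ℓ + 1) := by
      intro j hj
      rw [hq'lo j hj, hq'hi]
      exact o2 j hj
    have hDel : LeftAll q (ℓ + 1) := fun j hj => lt_trans o1 (o2 j hj)
    have hind : IndepCond q' (ℓ + 1) := indep_of_extremes (Or.inr hOr) (Or.inr hEx)
    cases c with
    | n1 =>
      have ha := hcL.2.1 0 (by omega)
      have hb := hDel 0 (by omega)
      exact absurd ha (by simp only [not_lt]; linarith)
    | n2 =>
      rw [(by decide : quadNum Letter.n2 Letter.D = Letter.n3)]
      exact ⟨hind, hOr, hEx⟩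
    | n3 =>
      rw [(by decide : quadNum Letter.n3 Letter.D = Letter.n3)]
      exact ⟨hind, hOr, hEx⟩
    | n4 =>
      have ha := hcL.2.1 0 (by omega)
      have hb := hDel 0 (by omega)
      exact absurd ha (by simp only [not_lt]; linarith)
    | U => exact ((not_vsep_vsep hcL.1 (vsep_of_letterU hcL) hH0)).elim
    | D => exact ((not_vsep_vsep hcL.1 (vsep_of_letterD hcL) hH0)).elim
    | L =>
      rw [(by decide : quadNum Letter.L Letter.D = Letter.n3)]
      exact ⟨hind, hOr, hEx⟩
    | R =>
      have ha := hcL.2.2 0 (by omega)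
      have hb := hDel 0 (by omega)
      exact absurd ha (by simp only [not_lt]; linarith)
  · have hOr : RightAll q' (ℓ + 1) := by
      intro j hj
      rw [hq'lo j hj, hq'hi]
      exact o2 j hj
    have hDel : RightAll q (ℓ + 1) := fun j hj => lt_trans (o2 j hj) o1
    have hind : IndepCond q' (ℓ + 1) := indep_of_extremes (Or.inl hOr) (Or.inr hEx)
    cases c with
    | n1 =>
      rw [(by decide : quadNum Letter.n1 Letter.D = Letter.n4)]
      exact ⟨hind, hOr, hEx⟩
    | n2 =>
      have ha := hcL.2.1 0 (by omega)
      have hb := hDel 0 (by omega)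
      exact absurd ha (by simp only [not_lt]; linarith)
    | n3 =>
      have ha := hcL.2.1 0 (by omega)
      have hb := hDel 0 (by omega)
      exact absurd ha (by simp only [not_lt]; linarith)
    | n4 =>
      rw [(by decide : quadNum Letter.n4 Letter.D = Letter.n4)]
      exact ⟨hind, hOr, hEx⟩
    | U => exact ((not_vsep_vsep hcL.1 (vsep_of_letterU hcL) hH0)).elim
    | D => exact ((not_vsep_vsep hcL.1 (vsep_of_letterD hcL) hH0)).elim
    | L =>
      have ha := hcL.2.2 0 (by omega)
      have hb := hDel 0 (by omega)
      exact absurd ha (by simp only [not_lt]; linarith)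
    | R =>
      rw [(by decide : quadNum Letter.R Letter.D = Letter.n4)]
      exact ⟨hind, hOr, hEx⟩

end Del


lemma del_main {N : ℕ} (σ : Equiv.Perm (Fin (N + 1))) (u : List Letter)
    (hu : u ∈ PinWords σ) (t : Fin (N + 1)) :
    ∃ (σ' : Equiv.Perm (Fin N)) (u' : List Letter),
      u' ∈ PinWords σ' ∧ LangOf u ⊆ LangOf u' ∧
      ∀ a b : Fin N, σ' a < σ' b ↔ σ (t.succAbove a) < σ (t.succAbove b) := by
  classical
  obtain ⟨p, p0, ⟨f, hpseq, hiso⟩, hseq0, hword⟩ := hu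
  set q : ℕ → Point := withOrigin p0 p with hqdef
  set ℓ : ℕ := (f.symm t).val with hldef
  have hℓN : ℓ < N + 1 := (f.symm t).isLt
  set p' : ℕ → Point := fun j => if j < ℓ then p j else p (j + 1) with hp'def
  set q' : ℕ → Point := withOrigin p0 p' with hq'def
  have hq'eq : ∀ j, q' j = if j < ℓ + 1 then q j else q (j + 1) := by
    intro j
    cases j with
    | zero =>
      rw [if_pos (by omega)]
      rfl
    | succ j =>
      show p' j = _
      by_cases hj : j < ℓ
      · rw [if_pos (by omega)]
        show _ = p j
        simp only [hp'def, if_pos hj]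
      · rw [if_neg (by omega)]
        show _ = p (j + 1)
        simp only [hp'def, if_neg hj]
  have hqlo : ∀ j, j ≤ ℓ → q' j = q j := fun j hj => by
    rw [hq'eq, if_pos (by omega)]
  have hqhi : ∀ j, ℓ + 1 ≤ j → q' j = q (j + 1) := fun j hj => by
    rw [hq'eq, if_neg (by omega)]
  have hulen : u.length = N + 1 := hword.1
  set c : Letter := u.getD ℓ Letter.U with hcdef
  set u' : List Letter := u.take ℓ ++ modif c (u.drop (ℓ + 1)) with hu'def
  have hmodlen : ∀ l : List Letter, (modif c l).length = l.length := by
    intro l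
    cases l <;> simp [modif]
  have hu'len : u'.length = N := by
    rw [hu'def, List.length_append, List.length_take, hmodlen, List.length_drop, hulen]
    omega
  have hu'lt : ∀ k, k < ℓ → u'.getD k Letter.U = u.getD k Letter.U := by
    intro k hk
    rw [hu'def]
    simp only [List.getD_eq_getElem?_getD]
    rw [List.getElem?_append_left (by rw [List.length_take]; omega),
      List.getElem?_take_of_lt hk]
  have hdropeq : ∀ (_ : ℓ < N), u.drop (ℓ + 1) =
      u.getD (ℓ + 1) Letter.U :: u.drop (ℓ + 2) := by
    intro h
    rw [List.getD_eq_getElem u Letter.U (by omega)]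
    exact List.drop_eq_getElem_cons (by omega)
  have hu'at : ∀ (_ : ℓ < N), u'.getD ℓ Letter.U =
      (if (u.getD (ℓ + 1) Letter.U).isNum then u.getD (ℓ + 1) Letter.U
       else quadNum c (u.getD (ℓ + 1) Letter.U)) := by
    intro h
    rw [hu'def, hdropeq h]
    simp only [List.getD_eq_getElem?_getD]
    rw [List.getElem?_append_right (by rw [List.length_take]; omega)]
    have he : ℓ - (u.take ℓ).length = 0 := by rw [List.length_take]; omega
    rw [he]
    simp [modif]
  have hu'gt : ∀ k, ℓ < k → k < N → u'.getD k Letter.U = u.getD (k + 1) Letter.U := by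
    intro k hk1 hk2
    rw [hu'def, hdropeq (by omega)]
    simp only [List.getD_eq_getElem?_getD]
    rw [List.getElem?_append_right (by rw [List.length_take]; omega)]
    have hlen' : (u.take ℓ).length = ℓ := by rw [List.length_take]; omega
    rw [hlen']
    obtain ⟨m, rfl⟩ : ∃ m, k = ℓ + (m + 1) := ⟨k - ℓ - 1, by omega⟩
    have he : ℓ + (m + 1) - ℓ = m + 1 := by omega
    rw [he]
    simp only [modif]
    rw [List.getElem?_cons_succ, List.getElem?_drop]
    have he2 : ℓ + 2 + m = ℓ + (m + 1) + 1 := by omega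
    rw [he2]
  have hkey : ∀ (_ : ℓ < N), LetterIs q' (ℓ + 1) (u'.getD ℓ Letter.U) := by
    intro h
    rw [hu'at h]
    have hcL : LetterIs q (ℓ + 1) c := hword.2 ℓ (by omega)
    have hdL : LetterIs q (ℓ + 2) (u.getD (ℓ + 1) Letter.U) := hword.2 (ℓ + 1) (by omega)
    have hq'lo : ∀ j < ℓ + 1, q' j = q j := fun j hj => hqlo j (by omega)
    have hq'hi : q' (ℓ + 1) = q (ℓ + 2) := hqhi (ℓ + 1) (by omega)
    by_cases hnum : (u.getD (ℓ + 1) Letter.U).isNum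
    · rw [if_pos hnum]
      exact LetterIs_transfer_num hq'hi (fun j hj => ⟨j, by omega, hq'lo j hj⟩) hnum hdL
    · rw [if_neg hnum]
      cases hd8 : u.getD (ℓ + 1) Letter.U with
      | n1 => rw [hd8] at hnum; exact absurd hnum (by decide)
      | n2 => rw [hd8] at hnum; exact absurd hnum (by decide)
      | n3 => rw [hd8] at hnum; exact absurd hnum (by decide)
      | n4 => rw [hd8] at hnum; exact absurd hnum (by decide)
      | U => rw [hd8] at hdL; exact key_U hq'lo hq'hi hcL hdL
      | D => rw [hd8] at hdL; exact key_D hq'lo hq'hi hcL hdL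
      | L => rw [hd8] at hdL; exact key_L hq'lo hq'hi hcL hdL
      | R => rw [hd8] at hdL; exact key_R hq'lo hq'hi hcL hdL
  have hword' : WordOf q' N u' := by
    refine ⟨hu'len, ?_⟩
    intro k hk
    rcases lt_trichotomy k ℓ with hkl | rfl | hkg
    · rw [hu'lt k hkl]
      have horig := hword.2 k (by omega)
      refine LetterIs_transfer ?_ ?_ ?_ ?_ ?_ horig
      · exact hqlo (k + 1) (by omega)
      · exact hqlo (k + 1 - 1) (by omega)
      · exact fun j hj => ⟨j, hj, hqlo j (by omega)⟩
      · exact fun j hj => ⟨j, hj, hqlo j (by omega)⟩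
      · exact fun hxd => letter_two_le hxd horig
    · exact hkey hk
    · rw [hu'gt k hkg hk]
      have horig := hword.2 (k + 1) (by omega)
      refine LetterIs_transfer ?_ ?_ ?_ ?_ ?_ horig
      · exact hqhi (k + 1) (by omega)
      · show q' (k + 1 - 1) = q (k + 2 - 1)
        rw [show k + 2 - 1 = k + 1 - 1 + 1 from by omega]
        exact hqhi (k + 1 - 1) (by omega)
      · intro j hj
        by_cases hjl : j < ℓ + 1
        · exact ⟨j, by omega, hqlo j (by omega)⟩
        · exact ⟨j + 1, by omega, hqhi j (by omega)⟩
      · intro j hj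
        by_cases hjl : j < ℓ + 1
        · exact ⟨j, by omega, hqlo j (by omega)⟩
        · exact ⟨j + 1, by omega, hqhi j (by omega)⟩
      · intro _
        omega
  have hseq' : IsPinSeq q' (N + 1) := by
    constructor
    · intro a ha b hb hab
      have e1 := hq'eq a
      have e2 := hq'eq b
      by_cases h1 : a < ℓ + 1 <;> by_cases h2 : b < ℓ + 1
      · rw [if_pos h1] at e1
        rw [if_pos h2] at e2
        rw [e1, e2]
        exact hseq0.1 a (by omega) b (by omega) hab
      · rw [if_pos h1] at e1
        rw [if_neg h2] at e2
        rw [e1, e2]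
        exact hseq0.1 a (by omega) (b + 1) (by omega) (by omega)
      · rw [if_neg h1] at e1
        rw [if_pos h2] at e2
        rw [e1, e2]
        exact hseq0.1 (a + 1) (by omega) b (by omega) (by omega)
      · rw [if_neg h1] at e1
        rw [if_neg h2] at e2
        rw [e1, e2]
        exact hseq0.1 (a + 1) (by omega) (b + 1) (by omega) (by omega)
    · intro k hk1 hk2
      by_cases hkle : k ≤ ℓ
      · have key := hseq0.2 k hk1 (by omega)
        have hc : q' k = q k := hqlo k hkle
        have hf : ∀ j < k, ∃ j' < k, q' j = q j' := fun j hj => ⟨j, hj, hqlo j (by omega)⟩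
        have hfs : ∀ j < k - 1, ∃ j' < k - 1, q' j = q j' :=
          fun j hj => ⟨j, hj, hqlo j (by omega)⟩
        have hp2 : q' (k - 1) = q (k - 1) := hqlo (k - 1) (by omega)
        refine ⟨OutsideBox_transfer hc hf key.1, ?_⟩
        rcases key.2 with hs | hi
        · exact Or.inl (SepCond_transfer hc hp2 hfs hs)
        · exact Or.inr (IndepCond_transfer hc hf hi)
      · by_cases hkeq : k = ℓ + 1
        · subst hkeq
          have h : ℓ < N := by omega
          have hlet := hkey h
          have hnl : (u'.getD ℓ Letter.U).isNum = true := by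
            rw [hu'at h]
            by_cases hnum : (u.getD (ℓ + 1) Letter.U).isNum
            · rw [if_pos hnum]
              exact hnum
            · rw [if_neg hnum]
              exact quadNum_isNum _ _
          have hind := letter_indep_of_num hnl hlet
          refine ⟨?_, Or.inr hind⟩
          have key := hseq0.2 (ℓ + 2) (by omega) (by omega)
          refine OutsideBox_transfer (hqhi (ℓ + 1) (by omega)) ?_ key.1
          intro j hj
          exact ⟨j, by omega, hqlo j (by omega)⟩
        · have key := hseq0.2 (k + 1) (by omega) (by omega)
          have hc : q' k = q (k + 1) := hqhi k (by omega)
          have hp2 : q' (k - 1) = q (k + 1 - 1) := by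
            rw [hqhi (k - 1) (by omega)]
            congr 1
            omega
          have hf : ∀ j < k, ∃ j' < k + 1, q' j = q j' := by
            intro j hj
            by_cases hjl : j < ℓ + 1
            · exact ⟨j, by omega, hqlo j (by omega)⟩
            · exact ⟨j + 1, by omega, hqhi j (by omega)⟩
          have hfs : ∀ j < k - 1, ∃ j' < k + 1 - 1, q' j = q j' := by
            intro j hj
            by_cases hjl : j < ℓ + 1
            · exact ⟨j, by omega, hqlo j (by omega)⟩
            · exact ⟨j + 1, by omega, hqhi j (by omega)⟩
          refine ⟨OutsideBox_transfer hc hf key.1, ?_⟩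
          rcases key.2 with hs | hi
          · exact Or.inl (SepCond_transfer hc hp2 hfs hs)
          · exact Or.inr (IndepCond_transfer hc hf hi)
  -- the reduced permutation
  have hvne : ∀ a : Fin N, σ (t.succAbove a) ≠ σ t := fun a h =>
    Fin.succAbove_ne t a (σ.injective h)
  have hFex : ∀ a : Fin N, ∃ z, (σ t).succAbove z = σ (t.succAbove a) :=
    fun a => Fin.exists_succAbove_eq (hvne a)
  set F : Fin N → Fin N := fun a => Classical.choose (hFex a) with hFdef
  have hFspec : ∀ a, (σ t).succAbove (F a) = σ (t.succAbove a) :=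
    fun a => Classical.choose_spec (hFex a)
  have hFinj : Function.Injective F := by
    intro a b hab
    have h1 : (σ t).succAbove (F a) = (σ t).succAbove (F b) := by rw [hab]
    rw [hFspec, hFspec] at h1
    exact Fin.succAbove_right_injective (σ.injective h1)
  set σ' : Equiv.Perm (Fin N) :=
    Equiv.ofBijective F (Finite.injective_iff_bijective.mp hFinj) with hσ'def
  have hσ'app : ∀ a, σ' a = F a := fun a => rfl
  have hσ'lt : ∀ a b : Fin N, σ' a < σ' b ↔ σ (t.succAbove a) < σ (t.succAbove b) := by
    intro a b
    rw [hσ'app, hσ'app, ← hFspec a, ← hFspec b]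
    exact Fin.succAbove_lt_succAbove_iff.symm
  -- the reduced reading order
  set τ : Fin (N + 1) := f.symm t with hτdef
  have hτv : (τ : ℕ) = ℓ := rfl
  have hgne : ∀ a : Fin N, f (τ.succAbove a) ≠ t := by
    intro a h
    have h2 : τ.succAbove a = τ := by
      have := congrArg f.symm h
      simpa [hτdef] using this
    exact Fin.succAbove_ne τ a h2
  have hGex : ∀ a : Fin N, ∃ z, t.succAbove z = f (τ.succAbove a) :=
    fun a => Fin.exists_succAbove_eq (hgne a)
  set G : Fin N → Fin N := fun a => Classical.choose (hGex a) with hGdef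
  have hGspec : ∀ a, t.succAbove (G a) = f (τ.succAbove a) :=
    fun a => Classical.choose_spec (hGex a)
  have hGinj : Function.Injective G := by
    intro a b hab
    have h1 : t.succAbove (G a) = t.succAbove (G b) := by rw [hab]
    rw [hGspec, hGspec] at h1
    exact Fin.succAbove_right_injective (f.injective h1)
  set f' : Fin N ≃ Fin N :=
    Equiv.ofBijective G (Finite.injective_iff_bijective.mp hGinj) with hf'def
  have hf'app : ∀ a, f' a = G a := fun a => rfl
  have hvalsa : ∀ a : Fin N, ((τ.succAbove a : Fin (N + 1)) : ℕ) =
      if (a : ℕ) < ℓ then (a : ℕ) else (a : ℕ) + 1 := by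
    intro a
    rw [Fin.succAbove]
    by_cases h : a.castSucc < τ
    · rw [if_pos h, if_pos (by simpa [Fin.lt_def, hτv] using h)]
      rfl
    · rw [if_neg h, if_neg (by simpa [Fin.lt_def, hτv] using h)]
      rfl
  have hp'val : ∀ a : Fin N, p' (a : ℕ) = p ((τ.succAbove a : Fin (N + 1)) : ℕ) := by
    intro a
    rw [hvalsa a]
    by_cases h : (a : ℕ) < ℓ
    · rw [if_pos h]
      simp only [hp'def, if_pos h]
    · rw [if_neg h]
      simp only [hp'def, if_neg h]
  have hrepr' : IsPinReprWith σ' p' f' := by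
    refine ⟨isPinSeq_of_withOrigin hseq', ?_⟩
    intro a b
    constructor
    · rw [hp'val a, hp'val b]
      have h1 := (hiso (τ.succAbove a) (τ.succAbove b)).1
      rw [h1]
      rw [hf'app, hf'app, ← hGspec a, ← hGspec b]
      exact Fin.succAbove_lt_succAbove_iff
    · rw [hp'val a, hp'val b]
      have h1 := (hiso (τ.succAbove a) (τ.succAbove b)).2
      rw [h1]
      rw [hσ'lt, hf'app, hf'app, ← hGspec a, ← hGspec b]
  -- language inclusion
  have hP1 : ∀ d rest', u.drop (ℓ + 1) = d :: rest' →
      c.IsDirection → d.IsDirection → Perp c d := by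
    intro d rest' hdrop hcd hdd
    have hlN : ℓ + 1 < N + 1 := by
      have hlen2 := congrArg List.length hdrop
      rw [List.length_drop, hulen] at hlen2
      simp only [List.length_cons] at hlen2
      omega
    have hdval : u.getD (ℓ + 1) Letter.U = d := by
      rw [hdropeq (by omega)] at hdrop
      injection hdrop
    have := word_alternation hword (show ℓ + 1 < N + 1 from hlN)
      (by rw [← hcdef]; exact hcd) (by rw [hdval]; exact hdd)
    rw [← hcdef, hdval] at this
    exact this
  have hP2 : ∀ d t' rest', u.drop (ℓ + 1) = d :: t' :: rest' →
      d.IsDirection → t'.IsDirection → Perp d t' := by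
    intro d t' rest' hdrop hdd htd
    have hlen2 := congrArg List.length hdrop
    rw [List.length_drop, hulen] at hlen2
    simp only [List.length_cons] at hlen2
    have hlN : ℓ + 2 < N + 1 := by omega
    have hdval : u.getD (ℓ + 1) Letter.U = d := by
      rw [hdropeq (by omega)] at hdrop
      injection hdrop
    have hdrop2 : u.drop (ℓ + 2) = t' :: rest' := by
      rw [hdropeq (by omega)] at hdrop
      injection hdrop
    have htval : u.getD (ℓ + 2) Letter.U = t' := by
      have h0 : (u.drop (ℓ + 2))[0]? = some t' := by
        rw [hdrop2]
        exact List.getElem?_cons_zero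
      rw [List.getElem?_drop] at h0
      rw [List.getD_eq_getElem?_getD]
      have he : ℓ + 2 + 0 = ℓ + 2 := by omega
      rw [he] at h0
      rw [h0]
      rfl
    have := word_alternation hword (show (ℓ + 1) + 1 < N + 1 from by omega)
      (by rw [hdval]; exact hdd) (by rw [show ℓ + 1 + 1 = ℓ + 2 from rfl, htval]; exact htd)
    rw [hdval, show ℓ + 1 + 1 = ℓ + 2 from rfl, htval] at this
    exact this
  have hlang : LangOf u ⊆ LangOf u' := by
    rw [hu'def, hcdef]
    exact lang_step (by omega) hP1 hP2
  exact ⟨σ', u', ⟨p', p0, ⟨f', hrepr'⟩, hseq', hword'⟩, hlang, hσ'lt⟩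


lemma strictMono_fin_id {n : ℕ} {g : Fin n → Fin n} (hg : StrictMono g) : g = id := by
  have hwf : WellFoundedLT (Fin n) := inferInstance
  have hsurj : Function.Surjective g := Finite.injective_iff_surjective.mp hg.injective
  have hr : Set.range g = Set.range (id : Fin n → Fin n) := by
    rw [Set.range_id]
    exact Set.range_eq_univ.mpr hsurj
  exact (@StrictMono.range_inj (Fin n) (Fin n) _ _ hwf g id hg strictMono_id).1 hr

lemma main_aux : ∀ (n : ℕ) (k : ℕ) (π : Equiv.Perm (Fin k)) (σ : Equiv.Perm (Fin n)),
    IsPattern π σ → Lperm σ ⊆ Lperm π := by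
  intro n
  induction n using Nat.strong_induction_on with
  | _ n IH =>
    intro k π σ hpat m hm
    obtain ⟨g, hgmono, hgpat⟩ := hpat
    by_cases hkn : k = n
    · subst hkn
      have hg_id : g = id := strictMono_fin_id hgmono
      have hσπ : σ = π := by
        have hmono2 : StrictMono (fun x => σ (π.symm x)) := by
          intro x y hxy
          have h1 := (hgpat (π.symm x) (π.symm y)).mp (by simpa using hxy)
          simpa [hg_id] using h1
        have h2 : (fun x => σ (π.symm x)) = id := strictMono_fin_id hmono2
        apply Equiv.ext
        intro a
        have h3 := congrFun h2 (π a)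
        simpa using h3
      rwa [hσπ] at hm
    · have hkn' : k < n := by
        rcases lt_or_gt_of_ne hkn with hlt | hgt
        · exact hlt
        · exfalso
          have hc := Fintype.card_le_of_injective g hgmono.injective
          simp only [Fintype.card_fin] at hc
          omega
      obtain ⟨N, rfl⟩ : ∃ N, n = N + 1 := ⟨n - 1, by omega⟩
      obtain ⟨t, ht⟩ : ∃ t : Fin (N + 1), ∀ a, g a ≠ t := by
        by_contra hcon
        push_neg at hcon
        have hsurj : Function.Surjective g := fun x => hcon x
        have hc := Fintype.card_le_of_surjective g hsurj
        simp only [Fintype.card_fin] at hc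
        omega
      obtain ⟨u, huP, hmu⟩ := hm
      obtain ⟨σ', u', hu'P, hlang, hσ'⟩ := del_main σ u huP t
      have hgex : ∀ a : Fin k, ∃ b, t.succAbove b = g a :=
        fun a => Fin.exists_succAbove_eq (ht a)
      classical
      set g' : Fin k → Fin N := fun a => Classical.choose (hgex a) with hg'def
      have hg'spec : ∀ a, t.succAbove (g' a) = g a :=
        fun a => Classical.choose_spec (hgex a)
      have hpat' : IsPattern π σ' := by
        refine ⟨g', ?_, ?_⟩
        · intro a b hab
          have h1 : t.succAbove (g' a) < t.succAbove (g' b) := by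
            rw [hg'spec, hg'spec]
            exact hgmono hab
          exact Fin.succAbove_lt_succAbove_iff.mp h1
        · intro a b
          rw [hgpat a b, ← hg'spec a, ← hg'spec b]
          exact (hσ' (g' a) (g' b)).symm
      exact IH N (by omega) k π σ' hpat' ⟨u', hu'P, hlang hmu⟩

/-- If `π ≤ σ` then `L_σ ⊆ L_π`. -/
theorem statement_5 {k n : ℕ} (π : Equiv.Perm (Fin k)) (σ : Equiv.Perm (Fin n))
    (h : IsPattern π σ) : Lperm σ ⊆ Lperm π :=
  main_aux n k π σ h

end PinStmt
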